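/- arXiv:cs/0501016 — 10 statements merged into one kernel-verified Lean document; each statement's English description precedes it below -/
import Mathlib

section
/- Let G and G' be basic k×n polynomial matrices over a finite field F. Then im G = im G' (as subspaces of F((z))^n) if and only if the polynomial parts coincide, i.e., im G ∩ F[z]^n = im G' ∩ F[z]^n, and these conditions are equivalent to G' = UG for some unimodular U ∈ GL_k(F[z]). -/
open Polynomial Matrix
open scoped Classical

/-- Embedding of polynomials into formal Laurent series. -/
noncomputable def polyToLS (F : Type*) [Field F] : Polynomial F →+* LaurentSeries F :=
  (HahnSeries.ofPowerSeries ℤ F).comp Polynomial.coeToPowerSeries.ringHom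

/-- The convolutional code generated by `G`: all `u·G` with `u` a Laurent-series row vector. -/
noncomputable def convCode {F : Type*} [Field F] {k n : ℕ}
    (G : Matrix (Fin k) (Fin n) (Polynomial F)) : Set (Fin n → LaurentSeries F) :=
  {v | ∃ u : Fin k → LaurentSeries F, v = Matrix.vecMul u (G.map (polyToLS F))}

/-- `G` is basic: it has a polynomial right inverse. -/
def IsBasic {F : Type*} [Field F] {k n : ℕ} (G : Matrix (Fin k) (Fin n) (Polynomial F)) : Prop :=
  ∃ H : Matrix (Fin n) (Fin k) (Polynomial F), G * H = 1

/-- The overall constraint length: maximal degree of a (full-size) `k`-minor of `G`. -/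
noncomputable def ocl {F : Type*} [Field F] {k n : ℕ}
    (G : Matrix (Fin k) (Fin n) (Polynomial F)) : ℕ :=
  Finset.univ.sup fun f : Fin k ↪ Fin n => ((G.submatrix id f).det).natDegree

/-- The degree of the `i`-th row of `G` (in `WithBot ℕ`, so `deg 0 = ⊥`). -/
noncomputable def rowDeg {F : Type*} [Field F] {k n : ℕ}
    (G : Matrix (Fin k) (Fin n) (Polynomial F)) (i : Fin k) : WithBot ℕ :=
  Finset.univ.sup fun j => (G i j).degree

/-- The state-index set of the controller canonical form for row degrees `γ`. -/
abbrev StateIdx {k : ℕ} (γ : Fin k → ℕ) := Σ i : Fin k, Fin (γ i)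

/-- State matrix `A` of the controller canonical form (block diagonal nilpotent shifts). -/
def ccfA (F : Type*) [Field F] {k : ℕ} (γ : Fin k → ℕ) :
    Matrix (StateIdx γ) (StateIdx γ) F :=
  fun s t => if s.1 = t.1 ∧ (t.2 : ℕ) = (s.2 : ℕ) + 1 then 1 else 0

/-- Input matrix `B` of the controller canonical form. -/
def ccfB (F : Type*) [Field F] {k : ℕ} (γ : Fin k → ℕ) :
    Matrix (Fin k) (StateIdx γ) F :=
  fun i s => if s.1 = i ∧ (s.2 : ℕ) = 0 then 1 else 0

/-- Output matrix `C` of the controller canonical form: higher coefficient rows of `G`. -/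
noncomputable def ccfC {F : Type*} [Field F] {k n : ℕ} (γ : Fin k → ℕ)
    (G : Matrix (Fin k) (Fin n) (Polynomial F)) : Matrix (StateIdx γ) (Fin n) F :=
  fun s j => (G s.1 j).coeff ((s.2 : ℕ) + 1)

/-- Feedthrough matrix `D`: the constant coefficient matrix of `G`. -/
noncomputable def ccfD {F : Type*} [Field F] {k n : ℕ}
    (G : Matrix (Fin k) (Fin n) (Polynomial F)) : Matrix (Fin k) (Fin n) F :=
  fun i j => (G i j).coeff 0

/-- Hamming weight of a vector. -/
noncomputable def hamWt {F : Type*} [Field F] {ι : Type*} (v : ι → F) : ℕ :=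
  Nat.card {j : ι // v j ≠ 0}


/-- The set of Laurent-series vectors all of whose entries are polynomial. -/
def polyVecs (F : Type*) [Field F] (n : ℕ) : Set (Fin n → LaurentSeries F) :=
  {v | ∀ j, ∃ p : Polynomial F, v j = polyToLS F p}

lemma polyToLS_injective (F : Type*) [Field F] : Function.Injective (polyToLS F) :=
  HahnSeries.ofPowerSeries_injective.comp (Polynomial.coe_injective F)

lemma mul_row {α : Type*} [CommRing α] {a b c : ℕ} (A : Matrix (Fin a) (Fin b) α)
    (B : Matrix (Fin b) (Fin c) α) (i : Fin a) : (A * B) i = Matrix.vecMul (A i) B := by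
  funext j
  simp [Matrix.mul_apply, Matrix.vecMul, dotProduct]

lemma row_mem {F : Type*} [Field F] {k n : ℕ} (G : Matrix (Fin k) (Fin n) (Polynomial F))
    (i : Fin k) : (G.map (polyToLS F)) i ∈ convCode G := by
  refine ⟨Pi.single i 1, ?_⟩
  funext j
  simp [Matrix.vecMul, dotProduct, Pi.single_apply]

lemma code_sub {F : Type*} [Field F] {k n : ℕ}
    {G G' : Matrix (Fin k) (Fin n) (Polynomial F)}
    (h : ∀ i, (G.map (polyToLS F)) i ∈ convCode G') : convCode G ⊆ convCode G' := by
  choose V hV using h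
  rintro v ⟨u, rfl⟩
  refine ⟨Matrix.vecMul u (Matrix.of V), ?_⟩
  have hVG : (Matrix.of V) * (G'.map (polyToLS F)) = G.map (polyToLS F) := by
    funext i
    rw [mul_row]
    exact (hV i).symm
  rw [Matrix.vecMul_vecMul, hVG]

lemma map_one' {F : Type*} [Field F] {k : ℕ} :
    ((1 : Matrix (Fin k) (Fin k) (Polynomial F)).map (polyToLS F)) = 1 :=
  Matrix.map_one _ (map_zero _) (map_one _)

theorem stmt1 {F : Type*} [Field F] [Fintype F] {k n : ℕ}
    (G G' : Matrix (Fin k) (Fin n) (Polynomial F))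
    (hG : IsBasic G) (hG' : IsBasic G') :
    (convCode G = convCode G' ↔
      convCode G ∩ polyVecs F n = convCode G' ∩ polyVecs F n) ∧
    (convCode G = convCode G' ↔
      ∃ U : Matrix (Fin k) (Fin k) (Polynomial F), IsUnit U ∧ G' = U * G) := by

  have key : ∀ (A B : Matrix (Fin k) (Fin n) (Polynomial F))
      (H : Matrix (Fin n) (Fin k) (Polynomial F)), A * H = 1 →
      (∀ i, (B.map (polyToLS F)) i ∈ convCode A) → (B * H) * A = B := by
    intro A B H hAH hrows
    choose v hv using hrows
    apply Matrix.map_injective (polyToLS_injective F)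
    show ((B * H) * A).map (polyToLS F) = B.map (polyToLS F)
    have h1 : (A.map (polyToLS F)) * (H.map (polyToLS F)) = 1 := by
      rw [← Matrix.map_mul, hAH, map_one']
    rw [Matrix.map_mul, Matrix.map_mul]
    funext i
    rw [mul_row, mul_row, Matrix.vecMul_vecMul, hv i, Matrix.vecMul_vecMul,
      ← Matrix.mul_assoc, h1, Matrix.one_mul, ← hv i]
  have hBfwd : convCode G = convCode G' →
      ∃ U : Matrix (Fin k) (Fin k) (Polynomial F), IsUnit U ∧ G' = U * G := by
    intro h
    obtain ⟨H, hH⟩ := hG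
    obtain ⟨H', hH'⟩ := hG'
    have h1 : (G' * H) * G = G' := key G G' H hH fun i => h ▸ row_mem G' i
    have h2 : (G * H') * G' = G := key G' G H' hH' fun i => h.symm ▸ row_mem G i
    have hUU' : (G' * H) * (G * H') = 1 := by
      rw [← Matrix.mul_assoc, h1, hH']
    have hU'U : (G * H') * (G' * H) = 1 := by
      rw [← Matrix.mul_assoc, h2, hH]
    exact ⟨G' * H, ⟨⟨G' * H, G * H', hUU', hU'U⟩, rfl⟩, h1.symm⟩
  have hBbwd : (∃ U : Matrix (Fin k) (Fin k) (Polynomial F), IsUnit U ∧ G' = U * G) →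
      convCode G = convCode G' := by
    rintro ⟨U, hU, rfl⟩
    obtain ⟨Uu, rfl⟩ := hU
    apply Set.Subset.antisymm
    · apply code_sub
      intro i
      refine ⟨(((Uu⁻¹ : _ˣ) : Matrix (Fin k) (Fin k) (Polynomial F)).map (polyToLS F)) i, ?_⟩
      have hG2 : G = ((Uu⁻¹ : _ˣ) : Matrix (Fin k) (Fin k) (Polynomial F)) *
          ((Uu : Matrix (Fin k) (Fin k) (Polynomial F)) * G) := by
        rw [← Matrix.mul_assoc, Uu.inv_mul, Matrix.one_mul]
      conv_lhs => rw [hG2]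
      rw [Matrix.map_mul, mul_row]
    · apply code_sub
      intro i
      exact ⟨((Uu : Matrix (Fin k) (Fin k) (Polynomial F)).map (polyToLS F)) i,
        by rw [← mul_row, ← Matrix.map_mul]⟩
  refine ⟨⟨fun h => by rw [h], fun h => ?_⟩, ⟨hBfwd, hBbwd⟩⟩
  have poly_row : ∀ (A : Matrix (Fin k) (Fin n) (Polynomial F)) (i : Fin k),
      (A.map (polyToLS F)) i ∈ polyVecs F n := fun A i j => ⟨A i j, rfl⟩
  apply Set.Subset.antisymm <;> apply code_sub <;> intro i
  · exact ((h ▸ Set.mem_inter (row_mem G i) (poly_row G i)) :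
      (G.map (polyToLS F)) i ∈ convCode G' ∩ polyVecs F n).1
  · exact ((h.symm ▸ Set.mem_inter (row_mem G' i) (poly_row G' i)) :
      (G'.map (polyToLS F)) i ∈ convCode G ∩ polyVecs F n).1
end

section
/- If G is a basic polynomial generator matrix, then every polynomial codeword comes from a polynomial message: im G ∩ F[z]^n = {uG : u ∈ F[z]^k}. -/
open Polynomial Matrix
open scoped Classical

theorem stmt2 {F : Type*} [Field F] [Fintype F] {k n : ℕ}
    (G : Matrix (Fin k) (Fin n) (Polynomial F)) (hbasic : IsBasic G) :
    convCode G ∩ {v | ∀ j, ∃ p : Polynomial F, v j = polyToLS F p} =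
      {v | ∃ u : Fin k → Polynomial F,
        v = fun j => polyToLS F (Matrix.vecMul u G j)} := by
  obtain ⟨H, hGH⟩ := hbasic
  set f := polyToLS F
  have hmap : (G.map f) * (H.map f) = 1 := by
    rw [← Matrix.map_mul, hGH, Matrix.map_one f (map_zero f) (map_one f)]
  ext v
  constructor
  · rintro ⟨⟨u, rfl⟩, hp⟩
    choose p hp using hp
    have hfp : (f ∘ p) = Matrix.vecMul u (G.map f) := by
      funext j; exact (hp j).symm
    have hu : Matrix.vecMul (f ∘ p) (H.map f) = u := by
      rw [hfp, Matrix.vecMul_vecMul, hmap, Matrix.vecMul_one]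
    refine ⟨Matrix.vecMul p H, ?_⟩
    funext j
    rw [RingHom.map_vecMul f G (Matrix.vecMul p H) j]
    have : f ∘ Matrix.vecMul p H = Matrix.vecMul (f ∘ p) (H.map f) := by
      funext i; exact RingHom.map_vecMul f H p i
    rw [this, hu]
  · rintro ⟨u, rfl⟩
    refine ⟨⟨f ∘ u, ?_⟩, fun j => ⟨Matrix.vecMul u G j, rfl⟩⟩
    funext j
    exact RingHom.map_vecMul f G u j
end

section
/- Let G ∈ F[z]^{k×n} with controller canonical form (A,B,C,D). For Laurent series u = Σ_{t≥0} u_t z^t and v = Σ_{t≥0} v_t z^t, define x = z·uB(I − zA)^{-1}. Then x_0 = 0, and v = uG if and only if x_{t+1} = x_t A + u_t B and v_t = x_t C + u_t D hold for all t ≥ 0. -/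
open Polynomial Matrix
open scoped Classical

set_option synthInstance.maxHeartbeats 1000000
set_option maxHeartbeats 1000000

/-!
Because `A` is a block-diagonal nilpotent shift, `I - zA` is invertible and `x = z·uB(I - zA)⁻¹`
is the content of a shift register: its component `(i, a)` is `z^(a+1) u_i`, the `i`-th input
delayed by `a + 1` steps. Reading off coefficients, shifting the register is `x_t A + u_t B`, and
`x_t C + u_t D` reassembles the coefficient `Σ_a u_{i,t-a} g_{ij,a}` of `uG`, because row `i` of `G`
has degree `γ_i`. Both sides of `v = uG` vanish in negative degrees, so they agree iff their
coefficients agree for `t ≥ 0`.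
-/

section ShiftRegister

variable {K : Type*} [Field K] {k : ℕ} {γ : Fin k → ℕ}

theorem vecMul_ccfA_zero (w : StateIdx γ → K) (i : Fin k) (h : 0 < γ i) :
    vecMul w (ccfA K γ) ⟨i, ⟨0, h⟩⟩ = 0 := by
  refine Finset.sum_eq_zero fun s _ => ?_
  simp [ccfA]

theorem vecMul_ccfA_succ (w : StateIdx γ → K) (i : Fin k) {b : ℕ} (h : b + 1 < γ i) :
    vecMul w (ccfA K γ) ⟨i, ⟨b + 1, h⟩⟩ = w ⟨i, ⟨b, by omega⟩⟩ := by
  rw [vecMul, dotProduct, Finset.sum_eq_single ⟨i, ⟨b, by omega⟩⟩]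
  · simp [ccfA]
  · rintro ⟨i', ⟨b', hb'⟩⟩ _ hne
    simp only [ccfA, mul_ite, mul_one, mul_zero, ite_eq_right_iff, and_imp]
    rintro rfl hbb
    exact absurd (by congr; omega) hne
  · simp

theorem vecMul_ccfB_zero (u : Fin k → K) (i : Fin k) (h : 0 < γ i) :
    vecMul u (ccfB K γ) ⟨i, ⟨0, h⟩⟩ = u i := by
  rw [vecMul, dotProduct, Finset.sum_eq_single i]
  · simp [ccfB]
  · intro i' _ hne
    simp [ccfB, Ne.symm hne]
  · simp

theorem vecMul_ccfB_succ (u : Fin k → K) (i : Fin k) {b : ℕ} (h : b + 1 < γ i) :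
    vecMul u (ccfB K γ) ⟨i, ⟨b + 1, h⟩⟩ = 0 := by
  rw [vecMul, dotProduct]
  refine Finset.sum_eq_zero fun s _ => ?_
  simp [ccfB]

theorem vecMul_ccfA_add_vecMul_ccfB (U : ℤ → Fin k → K) (t : ℤ) :
    vecMul (fun s : StateIdx γ => U (t - ((s.2 : ℕ) + 1)) s.1) (ccfA K γ) + vecMul (U t) (ccfB K γ)
      = fun s => U (t + 1 - ((s.2 : ℕ) + 1)) s.1 := by
  ext ⟨i, _ | b, hb⟩
  · simp [vecMul_ccfA_zero, vecMul_ccfB_zero]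
  · simp only [Pi.add_apply, vecMul_ccfA_succ, vecMul_ccfB_succ, add_zero]
    congr 1
    push_cast
    ring

theorem vecMul_one_sub_smul_ccfA (c : K) (w : StateIdx γ → K) :
    vecMul w (1 - c • ccfA K γ) = w - c • vecMul w (ccfA K γ) := by
  rw [vecMul_sub, vecMul_one, vecMul_smul]

theorem isUnit_one_sub_smul_ccfA (c : K) : IsUnit (1 - c • ccfA K γ) := by
  rw [← vecMul_injective_iff_isUnit]
  intro w w' h
  simp only [vecMul_one_sub_smul_ccfA] at h
  ext ⟨i, b, hb⟩
  induction b with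
  | zero => simpa [vecMul_ccfA_zero] using congrFun h ⟨i, ⟨0, hb⟩⟩
  | succ b ih =>
    simpa [vecMul_ccfA_succ, ih (by omega)] using congrFun h ⟨i, ⟨b + 1, hb⟩⟩

theorem vecMul_pow_mul_one_sub_smul_ccfA (c : K) (u : Fin k → K) :
    vecMul (fun s : StateIdx γ => c ^ ((s.2 : ℕ) + 1) * u s.1) (1 - c • ccfA K γ)
      = c • vecMul u (ccfB K γ) := by
  rw [vecMul_one_sub_smul_ccfA]
  ext ⟨i, _ | b, hb⟩
  · simp [vecMul_ccfA_zero, vecMul_ccfB_zero]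
  · simp only [Pi.sub_apply, Pi.smul_apply, vecMul_ccfA_succ, vecMul_ccfB_succ, smul_eq_mul]
    ring

theorem smul_vecMul_ccfB_mul_inv (c : K) (u : Fin k → K) :
    c • vecMul u (ccfB K γ * (1 - c • ccfA K γ)⁻¹)
      = fun s : StateIdx γ => c ^ ((s.2 : ℕ) + 1) * u s.1 := by
  have hdet := (isUnit_iff_isUnit_det _).mp (isUnit_one_sub_smul_ccfA (γ := γ) c)
  rw [← vecMul_vecMul, ← smul_vecMul, ← vecMul_pow_mul_one_sub_smul_ccfA, vecMul_vecMul,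
    mul_nonsing_inv _ hdet, vecMul_one]

end ShiftRegister

section LaurentSeries

variable {F : Type*} [Field F] {k n : ℕ} {γ : Fin k → ℕ}

theorem ccfA_map {K : Type*} [Field K] (f : F → K) (h0 : f 0 = 0) (h1 : f 1 = 1) :
    (ccfA F γ).map f = ccfA K γ := by
  ext s t
  simp only [map_apply, ccfA, apply_ite f, h0, h1]

theorem ccfB_map {K : Type*} [Field K] (f : F → K) (h0 : f 0 = 0) (h1 : f 1 = 1) :
    (ccfB F γ).map f = ccfB K γ := by
  ext i s
  simp only [map_apply, ccfB, apply_ite f, h0, h1]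

theorem polyToLS_monomial (a : ℕ) (c : F) :
    polyToLS F (monomial a c) = HahnSeries.single (a : ℤ) c := by
  rw [← C_mul_X_pow_eq_monomial]
  simp [polyToLS, HahnSeries.ofPowerSeries_C]

theorem coeff_polyToLS_X_pow_mul (a : ℕ) (f : LaurentSeries F) (t : ℤ) :
    (polyToLS F X ^ a * f).coeff t = f.coeff (t - a) := by
  rw [← map_pow, ← monomial_one_right_eq_X_pow, polyToLS_monomial, HahnSeries.coeff_single_mul,
    one_mul]

theorem coeff_mul_polyToLS (f : LaurentSeries F) {p : F[X]} {N : ℕ} (hp : p.natDegree < N)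
    (t : ℤ) : (f * polyToLS F p).coeff t = ∑ a ∈ Finset.range N, f.coeff (t - a) * p.coeff a := by
  conv_lhs => rw [p.as_sum_range' N hp]
  simp only [map_sum, polyToLS_monomial, Finset.mul_sum, HahnSeries.coeff_sum,
    HahnSeries.coeff_mul_single]

variable {G : Matrix (Fin k) (Fin n) F[X]}

theorem natDegree_le_of_rowDeg_eq (hγ : ∀ i, rowDeg G i = (γ i : WithBot ℕ)) (i : Fin k)
    (j : Fin n) : (G i j).natDegree ≤ γ i :=
  natDegree_le_iff_degree_le.mpr
    (hγ i ▸ Finset.le_sup (f := fun j => (G i j).degree) (Finset.mem_univ j))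

theorem coeff_vecMul_map_polyToLS (hG : ∀ i j, (G i j).natDegree ≤ γ i)
    (u : Fin k → LaurentSeries F) (t : ℤ) (j : Fin n) :
    (vecMul u (G.map (polyToLS F)) j).coeff t
      = ∑ i, ∑ a ∈ Finset.range (γ i + 1), (u i).coeff (t - a) * (G i j).coeff a := by
  simp only [vecMul, dotProduct, map_apply, HahnSeries.coeff_sum]
  exact Finset.sum_congr rfl fun i _ => coeff_mul_polyToLS _ (Nat.lt_succ_of_le (hG i j)) t

theorem coeff_vecMul_map_polyToLS_of_neg (hG : ∀ i j, (G i j).natDegree ≤ γ i)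
    {u : Fin k → LaurentSeries F} (hu : ∀ i, ∀ t : ℤ, t < 0 → (u i).coeff t = 0) {t : ℤ}
    (ht : t < 0) (j : Fin n) : (vecMul u (G.map (polyToLS F)) j).coeff t = 0 := by
  rw [coeff_vecMul_map_polyToLS hG]
  exact Finset.sum_eq_zero fun i _ => Finset.sum_eq_zero fun a _ => by
    rw [hu i _ (by omega), zero_mul]

theorem coeff_vecMul_map_polyToLS_eq_ccfC_ccfD (hG : ∀ i j, (G i j).natDegree ≤ γ i)
    (u : Fin k → LaurentSeries F) (t : ℤ) :
    (fun j => (vecMul u (G.map (polyToLS F)) j).coeff t)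
      = vecMul (fun s : StateIdx γ => (u s.1).coeff (t - ((s.2 : ℕ) + 1))) (ccfC γ G)
        + vecMul (fun i => (u i).coeff t) (ccfD G) := by
  ext j
  rw [coeff_vecMul_map_polyToLS hG]
  simp only [Pi.add_apply, vecMul, dotProduct, Fintype.sum_sigma, ccfC, ccfD,
    ← Finset.sum_add_distrib]
  refine Finset.sum_congr rfl fun i _ => ?_
  rw [Finset.sum_range_succ', Fin.sum_univ_eq_sum_range
    (fun a => (u i).coeff (t - (a + 1)) * (G i j).coeff (a + 1))]
  push_cast
  simp

end LaurentSeries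

theorem stmt6 {F : Type*} [Field F] {k n : ℕ}
    (G : Matrix (Fin k) (Fin n) (Polynomial F)) (γ : Fin k → ℕ)
    (hγ : ∀ i, rowDeg G i = (γ i : WithBot ℕ))
    (u : Fin k → LaurentSeries F) (v : Fin n → LaurentSeries F)
    (hu : ∀ i, ∀ t : ℤ, t < 0 → (u i).coeff t = 0)
    (hv : ∀ j, ∀ t : ℤ, t < 0 → (v j).coeff t = 0)
    (x : StateIdx γ → LaurentSeries F)
    (hx : x = (polyToLS F Polynomial.X) •
      Matrix.vecMul u ((ccfB F γ).map (fun a => polyToLS F (Polynomial.C a)) *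
        (1 - (polyToLS F Polynomial.X) •
          (ccfA F γ).map (fun a => polyToLS F (Polynomial.C a)))⁻¹)) :
    (∀ s, (x s).coeff 0 = 0) ∧
    ((v = Matrix.vecMul u (G.map (polyToLS F))) ↔
      (∀ t : ℤ, 0 ≤ t →
        ((fun s => (x s).coeff (t + 1)) =
          Matrix.vecMul (fun s => (x s).coeff t) (ccfA F γ) +
            Matrix.vecMul (fun i => (u i).coeff t) (ccfB F γ)) ∧
        ((fun j => (v j).coeff t) =
          Matrix.vecMul (fun s => (x s).coeff t) (ccfC γ G) +
            Matrix.vecMul (fun i => (u i).coeff t) (ccfD G)))) := by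
  have hG := natDegree_le_of_rowDeg_eq hγ
  rw [ccfA_map _ (by simp) (by simp), ccfB_map _ (by simp) (by simp),
    smul_vecMul_ccfB_mul_inv] at hx
  have hxt : ∀ t, (fun s => (x s).coeff t) = fun s => (u s.1).coeff (t - ((s.2 : ℕ) + 1)) := by
    intro t
    ext s
    rw [hx, coeff_polyToLS_X_pow_mul]
    push_cast
    rfl
  simp only [hxt, vecMul_ccfA_add_vecMul_ccfB (fun t i => (u i).coeff t),
    ← coeff_vecMul_map_polyToLS_eq_ccfC_ccfD hG, true_and]
  refine ⟨fun s => (congrFun (hxt 0) s).trans (hu _ _ (by omega)), fun h t _ => h ▸ rfl,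
    fun h => ?_⟩
  ext j t
  rcases lt_or_ge t 0 with ht | ht
  · rw [hv j t ht, coeff_vecMul_map_polyToLS_of_neg hG hu ht]
  · exact congrFun (h t ht) j
end

section
/- Let G ∈ F[z]^{k×n} have controller canonical form (A,B,C,D). If u = (u^{(1)},…,u^{(k)}) ∈ F[z]^k is a polynomial input, then the state sequence x = uB(z^{-1}I − A)^{-1} is polynomial and deg x = max{ γ_i + deg u^{(i)} : 1 ≤ i ≤ k, γ_i ≠ 0 }. -/
open Polynomial Matrix
open scoped Classical

/-!
For `c ≠ 0` the matrix `M = c • 1 - A` has trivial left kernel: the equation `y M = 0` reads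
`c y(i,0) = 0` and `c y(i,m+1) = y(i,m)`, which forces `y = 0` row by row. Hence `M` is invertible
and `x = u B M⁻¹` is the unique solution of `x M = u B`, namely `x(i,m) = u_i c⁻¹^(m+1)`.
With `c = z⁻¹` this is the polynomial `u_i z^(m+1)`, whose degree is largest for `m = γ_i - 1`.
-/

section ControllerCanonicalForm

variable {F : Type*} [Field F] {k : ℕ} (γ : Fin k → ℕ)

lemma vecMul_map_ccfB_apply {R : Type*} [CommRing R] [Algebra F R] (v : Fin k → R)
    (s : StateIdx γ) :
    (v ᵥ* (ccfB F γ).map (algebraMap F R)) s = if (s.2 : ℕ) = 0 then v s.1 else 0 := by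
  simp [vecMul, dotProduct, ccfB, apply_ite (algebraMap F R), eq_comm, ite_and]

lemma vecMul_map_ccfA_zero {R : Type*} [CommRing R] [Algebra F R] (y : StateIdx γ → R)
    (i : Fin k) (h : 0 < γ i) :
    (y ᵥ* (ccfA F γ).map (algebraMap F R)) ⟨i, ⟨0, h⟩⟩ = 0 := by
  simp [vecMul, dotProduct, ccfA]

lemma vecMul_map_ccfA_succ {R : Type*} [CommRing R] [Algebra F R] (y : StateIdx γ → R)
    (i : Fin k) (m : ℕ) (h : m + 1 < γ i) :
    (y ᵥ* (ccfA F γ).map (algebraMap F R)) ⟨i, ⟨m + 1, h⟩⟩ = y ⟨i, ⟨m, by omega⟩⟩ := by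
  simp only [vecMul, dotProduct, ccfA, map_apply, apply_ite (algebraMap F R), map_one, map_zero,
    mul_ite, mul_one, mul_zero, Nat.add_right_cancel_iff]
  rw [Fintype.sum_eq_single ⟨i, ⟨m, by omega⟩⟩]
  · simp
  · rintro ⟨j, r⟩ hne
    rw [if_neg]
    rintro ⟨rfl, rfl⟩
    exact hne rfl

variable {K : Type*} [Field K] [Algebra F K]

lemma vecMul_smul_one_sub_map_ccfA_apply (c : K) (y : StateIdx γ → K) (s : StateIdx γ) :
    (y ᵥ* (c • 1 - (ccfA F γ).map (algebraMap F K))) s =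
      c * y s - (y ᵥ* (ccfA F γ).map (algebraMap F K)) s := by
  simp [vecMul_sub, vecMul_smul, vecMul_one]

lemma eq_zero_of_vecMul_smul_one_sub_map_ccfA {c : K} (hc : c ≠ 0) {y : StateIdx γ → K}
    (hy : y ᵥ* (c • 1 - (ccfA F γ).map (algebraMap F K)) = 0) : y = 0 := by
  funext ⟨i, ⟨m, hm⟩⟩
  have hym := congrFun hy ⟨i, ⟨m, hm⟩⟩
  induction m with
  | zero =>
    rw [vecMul_smul_one_sub_map_ccfA_apply, vecMul_map_ccfA_zero] at hym
    simpa [hc] using hym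
  | succ m ih =>
    rw [vecMul_smul_one_sub_map_ccfA_apply, vecMul_map_ccfA_succ,
      ih (by omega) (congrFun hy _)] at hym
    simpa [hc] using hym

lemma det_smul_one_sub_map_ccfA_ne_zero {c : K} (hc : c ≠ 0) :
    (c • 1 - (ccfA F γ).map (algebraMap F K)).det ≠ 0 := by
  rw [Ne, ← exists_vecMul_eq_zero_iff]
  rintro ⟨y, hy0, hy⟩
  exact hy0 (eq_zero_of_vecMul_smul_one_sub_map_ccfA γ hc hy)

theorem vecMul_map_ccfB_mul_inv_smul_one_sub_map_ccfA {c : K} (hc : c ≠ 0) (v : Fin k → K) :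
    v ᵥ* ((ccfB F γ).map (algebraMap F K) * (c • 1 - (ccfA F γ).map (algebraMap F K))⁻¹) =
      fun s => v s.1 * c⁻¹ ^ ((s.2 : ℕ) + 1) := by
  set M := c • 1 - (ccfA F γ).map (algebraMap F K)
  have hM : (fun s : StateIdx γ => v s.1 * c⁻¹ ^ ((s.2 : ℕ) + 1)) ᵥ* M =
      v ᵥ* (ccfB F γ).map (algebraMap F K) := by
    funext ⟨i, ⟨m, hm⟩⟩
    rw [vecMul_smul_one_sub_map_ccfA_apply, vecMul_map_ccfB_apply]
    cases m with
    | zero =>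
      rw [vecMul_map_ccfA_zero, if_pos rfl]
      linear_combination v i * mul_inv_cancel₀ hc
    | succ m =>
      rw [vecMul_map_ccfA_succ, if_neg m.succ_ne_zero]
      linear_combination v i * c⁻¹ ^ (m + 1) * mul_inv_cancel₀ hc
  rw [← vecMul_vecMul, ← hM, vecMul_vecMul,
    mul_nonsing_inv _ (isUnit_iff_ne_zero.2 (det_smul_one_sub_map_ccfA_ne_zero γ hc)), vecMul_one]

lemma sup_stateIdx_add_succ (d : Fin k → WithBot ℕ) :
    (Finset.univ.sup fun s : StateIdx γ => d s.1 + (((s.2 : ℕ) + 1 : ℕ) : WithBot ℕ)) =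
      (Finset.univ.filter fun i => γ i ≠ 0).sup fun i => d i + (γ i : WithBot ℕ) := by
  apply le_antisymm
  · refine Finset.sup_le fun ⟨i, m⟩ _ => ?_
    refine Finset.le_sup_of_le (b := i) (Finset.mem_filter.2 ⟨Finset.mem_univ _, m.pos.ne'⟩) ?_
    gcongr
    exact m.isLt
  · refine Finset.sup_le fun i hi => ?_
    have hγi : 0 < γ i := Nat.pos_of_ne_zero (Finset.mem_filter.1 hi).2
    refine Finset.le_sup_of_le (b := ⟨i, ⟨γ i - 1, by omega⟩⟩) (Finset.mem_univ _) ?_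
    simp only [Nat.sub_add_cancel hγi, le_refl]

end ControllerCanonicalForm

theorem stmt7_general {F : Type*} [Field F] {k : ℕ}
    (γ : Fin k → ℕ)
    (u : Fin k → Polynomial F)
    (x : StateIdx γ → RatFunc F)
    (hx : x = Matrix.vecMul (fun i => algebraMap (Polynomial F) (RatFunc F) (u i))
      (((ccfB F γ).map (algebraMap F (RatFunc F))) *
        ((RatFunc.X : RatFunc F)⁻¹ • (1 : Matrix (StateIdx γ) (StateIdx γ) (RatFunc F)) -
          (ccfA F γ).map (algebraMap F (RatFunc F)))⁻¹)) :
    ∃ xp : StateIdx γ → Polynomial F,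
      (∀ s, algebraMap (Polynomial F) (RatFunc F) (xp s) = x s) ∧
      (Finset.univ.sup fun s : StateIdx γ => (xp s).degree) =
        (Finset.univ.filter fun i : Fin k => γ i ≠ 0).sup
          (fun i => (u i).degree + (γ i : WithBot ℕ)) := by
  refine ⟨fun s => u s.1 * X ^ ((s.2 : ℕ) + 1), fun s => ?_, ?_⟩
  · rw [hx, vecMul_map_ccfB_mul_inv_smul_one_sub_map_ccfA γ (inv_ne_zero RatFunc.X_ne_zero)]
    simp [RatFunc.algebraMap_X]
  · simp only [degree_mul, degree_X_pow]
    exact sup_stateIdx_add_succ γ fun i => (u i).degree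

theorem stmt7 {F : Type*} [Field F] {k n : ℕ}
    (G : Matrix (Fin k) (Fin n) (Polynomial F)) (γ : Fin k → ℕ)
    (hγ : ∀ i, rowDeg G i = (γ i : WithBot ℕ))
    (u : Fin k → Polynomial F)
    (x : StateIdx γ → RatFunc F)
    (hx : x = Matrix.vecMul (fun i => algebraMap (Polynomial F) (RatFunc F) (u i))
      (((ccfB F γ).map (algebraMap F (RatFunc F))) *
        ((RatFunc.X : RatFunc F)⁻¹ • (1 : Matrix (StateIdx γ) (StateIdx γ) (RatFunc F)) -
          (ccfA F γ).map (algebraMap F (RatFunc F)))⁻¹)) :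
    ∃ xp : StateIdx γ → Polynomial F,
      (∀ s, algebraMap (Polynomial F) (RatFunc F) (xp s) = x s) ∧
      (Finset.univ.sup fun s : StateIdx γ => (xp s).degree) =
        (Finset.univ.filter fun i : Fin k => γ i ≠ 0).sup
          (fun i => (u i).degree + (γ i : WithBot ℕ)) :=
  stmt7_general γ u x hx
end

section
/- Let G be a minimal basic generator matrix with controller canonical form (A,B,C,D), let u ∈ F[z]^k, v = uG with v_0 ≠ 0 and deg v = N > 0, and let x = uB(z^{-1}I − A)^{-1} be the state sequence. For L ∈ {1,…,N}, the state x_L is zero if and only if v decomposes as v = ṽ + v̂ with ṽ, v̂ nonzero polynomial codewords of im G, deg ṽ < L, and v̂ ∈ z^L F[z]^n. -/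
open Polynomial Matrix
open scoped Classical

/-!
Unrolling the controller canonical form, the state component `(i, a)` is `z^(a+1) u_i`, so
`x_L = 0` says exactly that each `u_i` has no coefficients in the window `[L - γ_i, L)`.
Given that, cutting every `u_i` at `L - γ_i` splits `v` into a codeword of degree `< L` and a
codeword divisible by `z^L`. Conversely, let `v = wG + v̂` with `deg wG < L` and `z^L ∣ v̂`.
Since `G` is basic and minimal, its leading row coefficient matrix has full row rank, so the
predictable degree property gives `deg w_i + γ_i < L`; and `u = w + v̂H` for a polynomial right inverse `H`, so
`u_i` vanishes on the window.
-/

namespace Polynomial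

variable {R ι : Type*} [CommSemiring R]

lemma coeff_prod_sum_of_natDegree_le (s : Finset ι) (p : ι → R[X]) (d : ι → ℕ)
    (h : ∀ i ∈ s, (p i).natDegree ≤ d i) :
    (∏ i ∈ s, p i).coeff (∑ i ∈ s, d i) = ∏ i ∈ s, (p i).coeff (d i) := by
  induction s using Finset.cons_induction with
  | empty => simp
  | cons a s _ ih =>
    rw [Finset.forall_mem_cons] at h
    rw [Finset.prod_cons, Finset.sum_cons, Finset.prod_cons,
      coeff_mul_add_eq_of_natDegree_le h.1
        ((natDegree_prod_le s p).trans (Finset.sum_le_sum h.2)), ih h.2]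

end Polynomial

namespace Matrix

variable {R m ι : Type*} [Semiring R] [Fintype m]

lemma vecMul_injective_of_mul_eq_one [Fintype ι] [DecidableEq m] {M : Matrix m ι R}
    {H : Matrix ι m R} (hMH : M * H = 1) : Function.Injective M.vecMul :=
  fun v w hvw => by simpa [vecMul_vecMul, hMH] using congrArg (· ᵥ* H) hvw

lemma dvd_vecMul_apply {a : R} {w : m → R}
    (hw : ∀ i, a ∣ w i) (M : Matrix m ι R) (j : ι) : a ∣ (w ᵥ* M) j :=
  Finset.dvd_sum fun i _ => (hw i).mul_right _

end Matrix

section LeadingRowCoeff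

variable {R : Type*} [CommRing R]

def leadingRowCoeff {m ι : Type*} (G : Matrix m ι R[X]) (γ : m → ℕ) : Matrix m ι R :=
  of fun i j => (G i j).coeff (γ i)

lemma coeff_det_sum_of_natDegree_le {m : Type*} [Fintype m] [DecidableEq m]
    (M : Matrix m m R[X]) (γ : m → ℕ) (h : ∀ i j, (M i j).natDegree ≤ γ i) :
    M.det.coeff (∑ i, γ i) = (leadingRowCoeff M γ).det := by
  simp only [det_apply, finsetSum_coeff, coeff_smul]
  refine Finset.sum_congr rfl fun σ _ => ?_
  rw [← Equiv.sum_comp σ γ, coeff_prod_sum_of_natDegree_le _ _ _ fun i _ => h (σ i) i]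
  rfl

section PredictableDegree

variable {m ι : Type*} [Fintype m] {G : Matrix m ι R[X]} {γ : m → ℕ}

lemma degree_vecMul_lt_of_coeff_eq_zero (hdeg : ∀ i j, (G i j).natDegree ≤ γ i) {w : m → R[X]}
    {L : ℕ} (hw : ∀ i t, L ≤ t + γ i → (w i).coeff t = 0) (j : ι) :
    ((w ᵥ* G) j).degree < L := by
  rw [degree_lt_iff_coeff_zero]
  intro d hd
  simp only [vecMul, dotProduct, finsetSum_coeff, coeff_mul]
  refine Finset.sum_eq_zero fun i _ => Finset.sum_eq_zero fun ⟨a, b⟩ hab => ?_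
  rw [Finset.HasAntidiagonal.mem_antidiagonal] at hab
  rcases le_or_gt b (γ i) with hb | hb
  · rw [hw i a (by omega), zero_mul]
  · rw [coeff_eq_zero_of_natDegree_lt ((hdeg i j).trans_lt hb), mul_zero]

lemma coeff_vecMul_eq_vecMul_leadingRowCoeff (hdeg : ∀ i j, (G i j).natDegree ≤ γ i)
    {w : m → R[X]} {D : ℕ} (hD : ∀ i, w i ≠ 0 → (w i).natDegree + γ i ≤ D) (j : ι) :
    ((w ᵥ* G) j).coeff D = ((fun i => (w i).coeff (D - γ i)) ᵥ* leadingRowCoeff G γ) j := by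
  simp only [vecMul, dotProduct, finsetSum_coeff]
  refine Finset.sum_congr rfl fun i _ => ?_
  by_cases hw : w i = 0
  · simp [hw]
  · have h := coeff_mul_add_eq_of_natDegree_le (Nat.le_sub_of_add_le (hD i hw)) (hdeg i j)
    rwa [Nat.sub_add_cancel (le_of_add_le_right (hD i hw))] at h

theorem coeff_eq_zero_of_degree_vecMul_lt (hdeg : ∀ i j, (G i j).natDegree ≤ γ i)
    (hrank : Function.Injective (leadingRowCoeff G γ).vecMul) {w : m → R[X]} {L : ℕ}
    (hw : ∀ j, ((w ᵥ* G) j).degree < L) (i₀ : m) (t : ℕ) (ht : L ≤ t + γ i₀) :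
    (w i₀).coeff t = 0 := by
  by_contra h₀
  have hS : (Finset.univ.filter fun i => w i ≠ 0).Nonempty :=
    ⟨i₀, by simpa using fun h => h₀ (by simp [h])⟩
  set D := (Finset.univ.filter fun i => w i ≠ 0).sup' hS fun i => (w i).natDegree + γ i
  have hD : ∀ i, w i ≠ 0 → (w i).natDegree + γ i ≤ D :=
    fun i hi => Finset.le_sup' (fun i => (w i).natDegree + γ i) (by simpa using hi)
  obtain ⟨i₁, hi₁, hD₁⟩ := Finset.exists_mem_eq_sup' hS fun i => (w i).natDegree + γ i
  have hw₁ : w i₁ ≠ 0 := by simpa using hi₁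
  have hLD : L ≤ D := ht.trans ((Nat.add_le_add_right (le_natDegree_of_ne_zero h₀) _).trans
    (hD i₀ fun h => h₀ (by simp [h])))
  have hc : (fun i => (w i).coeff (D - γ i)) = 0 := hrank <| funext fun j => by
    dsimp only
    rw [zero_vecMul, ← coeff_vecMul_eq_vecMul_leadingRowCoeff hdeg hD,
      coeff_eq_zero_of_degree_lt ((hw j).trans_le (by exact_mod_cast hLD)), Pi.zero_apply]
  have hlead : (w i₁).leadingCoeff = 0 := by
    simpa [show D = (w i₁).natDegree + γ i₁ from hD₁] using congrFun hc i₁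
  exact hw₁ (leadingCoeff_eq_zero.1 hlead)

end PredictableDegree

theorem leadingRowCoeff_vecMul_injective {F : Type*} [Field F] {k n : ℕ}
    {G : Matrix (Fin k) (Fin n) F[X]} {γ : Fin k → ℕ} (hbasic : IsBasic G) (hdeg : ∀ i j, (G i j).natDegree ≤ γ i) (hmin : ocl G = ∑ i, γ i) :
    Function.Injective (leadingRowCoeff G γ).vecMul := by
  by_cases hγ : ∑ i, γ i = 0
  · obtain ⟨H, hH⟩ := hbasic
    have hG : leadingRowCoeff G γ = G.map constantCoeff := by
      ext i j
      simp [leadingRowCoeff, Finset.sum_eq_zero_iff.1 hγ i (Finset.mem_univ i)]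
    rw [hG]
    exact vecMul_injective_of_mul_eq_one (H := H.map constantCoeff)
      (by rw [← Matrix.map_mul, hH, Matrix.map_one _ (map_zero _) (map_one _)])
  · have hne : (Finset.univ : Finset (Fin k ↪ Fin n)).Nonempty := by
      by_contra he
      rw [Finset.not_nonempty_iff_eq_empty] at he
      exact hγ (by rw [← hmin, ocl, he, Finset.sup_empty]; rfl)
    obtain ⟨f, -, hf⟩ := Finset.exists_mem_eq_sup _ hne
      fun f : Fin k ↪ Fin n => (G.submatrix id f).det.natDegree
    have hdeg_det : (G.submatrix id f).det.natDegree = ∑ i, γ i := hf ▸ hmin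
    have hdet : (G.submatrix id f).det ≠ 0 := fun h => hγ (by simp [← hdeg_det, h])
    have hunit : IsUnit ((leadingRowCoeff G γ).submatrix id f) := by
      rw [isUnit_iff_isUnit_det, isUnit_iff_ne_zero]
      have hlead := leadingCoeff_ne_zero.2 hdet
      rwa [leadingCoeff, hdeg_det,
        coeff_det_sum_of_natDegree_le (G.submatrix id f) γ fun i j => hdeg i (f j)] at hlead
    intro v w hvw
    exact vecMul_injective_iff_isUnit.2 hunit (funext fun j => by
      simpa [vecMul, dotProduct] using congrFun hvw (f j))

end LeadingRowCoeff

section ControllerCanonicalForm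

variable {F : Type*} [Field F] {k : ℕ} {γ : Fin k → ℕ}

lemma polyToLS_coeff (p : F[X]) (m : ℕ) : (polyToLS F p).coeff (m : ℤ) = p.coeff m := by
  simp [polyToLS, Polynomial.coeff_coe]

lemma ccfA_map_mul_apply {R ι : Type*} [Semiring R] {f : F → R} (hf₀ : f 0 = 0) (hf₁ : f 1 = 1)
    (P : Matrix (StateIdx γ) ι R) (i : Fin k) (a : Fin (γ i)) (j : ι) :
    ((ccfA F γ).map f * P) ⟨i, a⟩ j =
      if h : (a : ℕ) + 1 < γ i then P ⟨i, ⟨a + 1, h⟩⟩ j else 0 := by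
  have hA : ∀ t, (ccfA F γ).map f ⟨i, a⟩ t =
      if h : (a : ℕ) + 1 < γ i then (if t = ⟨i, ⟨a + 1, h⟩⟩ then 1 else 0) else 0 := by
    rintro ⟨i', b⟩
    by_cases hi : i = i'
    · subst hi
      have := b.isLt
      simp only [map_apply, ccfA, Sigma.mk.inj_iff, heq_eq_eq, Fin.ext_iff, true_and]
      split_ifs <;> simp only [hf₀, hf₁]
      omega
    · simp [ccfA, hi, Ne.symm hi, hf₀]
  simp only [mul_apply, hA]
  split_ifs <;> simp

lemma ccfB_map_mul_apply {R ι : Type*} [Semiring R] {f : F → R} (hf₀ : f 0 = 0) (hf₁ : f 1 = 1)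
    (P : Matrix (StateIdx γ) ι R) (i : Fin k) (j : ι) :
    ((ccfB F γ).map f * P) i j = if h : 0 < γ i then P ⟨i, ⟨0, h⟩⟩ j else 0 := by
  have hB : ∀ t, (ccfB F γ).map f i t =
      if h : 0 < γ i then (if t = ⟨i, ⟨0, h⟩⟩ then 1 else 0) else 0 := by
    rintro ⟨i', b⟩
    by_cases hi : i' = i
    · subst hi
      have := b.isLt
      simp only [map_apply, ccfB, Sigma.mk.inj_iff, heq_eq_eq, Fin.ext_iff, true_and]
      split_ifs <;> simp only [hf₀, hf₁]
      omega
    · simp [ccfB, hi, hf₀]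
  simp only [mul_apply, hB]
  split_ifs <;> simp

variable (F γ) in
noncomputable def ccfResolvent : Matrix (StateIdx γ) (StateIdx γ) (LaurentSeries F) :=
  fun s t => if s.1 = t.1 ∧ (s.2 : ℕ) ≤ t.2 then polyToLS F X ^ ((t.2 : ℕ) - s.2) else 0

lemma one_sub_smul_ccfA_mul_ccfResolvent :
    (1 - polyToLS F X • (ccfA F γ).map (fun a => polyToLS F (C a))) * ccfResolvent F γ = 1 := by
  refine Matrix.ext fun ⟨i, a⟩ ⟨j, b⟩ => ?_
  rw [sub_mul, one_mul, smul_mul, Matrix.sub_apply, Matrix.smul_apply,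
    ccfA_map_mul_apply (by simp) (by simp), one_apply]
  by_cases hij : i = j
  · subst hij
    have := b.isLt
    rcases lt_trichotomy (a : ℕ) b with hab | hab | hab
    · simp only [ccfResolvent, hab.le, and_self, ↓reduceIte, show (a : ℕ) + 1 < γ i by omega,
        ↓reduceDIte, show (a : ℕ) + 1 ≤ b by omega, smul_eq_mul, Sigma.mk.injEq, heq_eq_eq,
        Fin.ext_iff, hab.ne, and_false]
      rw [← pow_succ', show (b : ℕ) - (a + 1) + 1 = b - a by omega, sub_self]
    · simp [ccfResolvent, Fin.ext_iff, hab]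
    · simp [ccfResolvent, Fin.ext_iff, hab.ne', hab.not_ge, show ¬ (a : ℕ) + 1 ≤ b by omega]
  · simp [ccfResolvent, hij]

variable (F γ) in
/-- The state sequence `u B (z⁻¹ I - A)⁻¹`, written as `z • u B (I - z A)⁻¹`. -/
noncomputable def ccfState (u : Fin k → F[X]) : StateIdx γ → LaurentSeries F :=
  polyToLS F X • vecMul (fun i => polyToLS F (u i))
    ((ccfB F γ).map (fun a => polyToLS F (C a)) *
      (1 - polyToLS F X • (ccfA F γ).map (fun a => polyToLS F (C a)))⁻¹)

lemma ccfState_apply (u : Fin k → F[X]) (i : Fin k) (a : Fin (γ i)) :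
    ccfState F γ u ⟨i, a⟩ = polyToLS F (u i * X ^ ((a : ℕ) + 1)) := by
  rw [ccfState, Matrix.inv_eq_right_inv one_sub_smul_ccfA_mul_ccfResolvent, Pi.smul_apply,
    smul_eq_mul, vecMul, dotProduct, Finset.sum_eq_single i]
  · simp only [map_zero, map_one, ccfB_map_mul_apply, a.pos, ↓reduceDIte, ccfResolvent, zero_le,
      and_self, ↓reduceIte, tsub_zero, map_mul, map_pow]
    ring
  · intro i' _ hi'
    simp [ccfB_map_mul_apply, ccfResolvent, hi']
  · simp

lemma ccfState_coeff_eq_zero_iff (u : Fin k → F[X]) (L : ℕ) :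
    (∀ s, (ccfState F γ u s).coeff (L : ℤ) = 0) ↔
      ∀ i t, t < L → L ≤ t + γ i → (u i).coeff t = 0 := by
  simp only [Sigma.forall, ccfState_apply, polyToLS_coeff, coeff_mul_X_pow']
  constructor
  · intro h i t htL hLt
    have hb : L - 1 - t < γ i := by omega
    simpa [show L - 1 - t + 1 ≤ L by omega, show L - (L - 1 - t + 1) = t by omega]
      using h i ⟨L - 1 - t, hb⟩
  · intro h i b
    split_ifs with hb
    · exact h i _ (by omega) (by omega)
    · rfl

end ControllerCanonicalForm

section CodewordSplit

variable {F : Type*} [Field F] {k n : ℕ} {G : Matrix (Fin k) (Fin n) F[X]} {γ : Fin k → ℕ}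

theorem exists_codeword_split_of_coeff_eq_zero (hdeg : ∀ i j, (G i j).natDegree ≤ γ i)
    {u : Fin k → F[X]} {N L : ℕ} (hv0 : (fun j => ((u ᵥ* G) j).coeff 0) ≠ (0 : Fin n → F))
    (hN : (Finset.univ.sup fun j => ((u ᵥ* G) j).degree) = N) (hL1 : 1 ≤ L) (hLN : L ≤ N)
    (hu : ∀ i t, t < L → L ≤ t + γ i → (u i).coeff t = 0) :
    ∃ vt vh : Fin n → F[X], (∃ w, vt = w ᵥ* G) ∧ (∃ w, vh = w ᵥ* G) ∧ vt ≠ 0 ∧ vh ≠ 0 ∧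
      u ᵥ* G = vt + vh ∧ (∀ j, (vt j).degree < L) ∧ (∀ j, ∀ t, t < L → (vh j).coeff t = 0) := by
  set low : Fin k → F[X] := fun i => PowerSeries.trunc (L - γ i) (u i : PowerSeries F)
  have hlow : ∀ i t, (low i).coeff t = if t < L - γ i then (u i).coeff t else 0 := fun i t => by
    simp [low, PowerSeries.coeff_trunc, Polynomial.coeff_coe]
  have hvt : ∀ j, ((low ᵥ* G) j).degree < L :=
    degree_vecMul_lt_of_coeff_eq_zero hdeg fun i t ht => by rw [hlow, if_neg (by omega)]
  have hvh : ∀ j, X ^ L ∣ ((u - low) ᵥ* G) j := by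
    refine dvd_vecMul_apply (fun i => X_pow_dvd_iff.2 fun t ht => ?_) G
    rw [Pi.sub_apply, coeff_sub, hlow]
    split_ifs with h
    · exact sub_self _
    · rw [sub_zero]
      exact hu i t ht (by omega)
  have hsplit : u ᵥ* G = low ᵥ* G + (u - low) ᵥ* G := by rw [← add_vecMul, add_sub_cancel]
  refine ⟨_, _, ⟨low, rfl⟩, ⟨u - low, rfl⟩, fun h => hv0 ?_, fun h => ?_, hsplit, hvt,
    fun j => X_pow_dvd_iff.1 (hvh j)⟩
  · funext j
    simpa [hsplit, h] using X_pow_dvd_iff.1 (hvh j) 0 hL1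
  · have hlt : (Finset.univ.sup fun j => ((u ᵥ* G) j).degree) < L :=
      (Finset.sup_lt_iff (WithBot.bot_lt_coe L)).2 fun j _ => by
        rw [hsplit, h, add_zero]
        exact hvt j
    rw [hN] at hlt
    exact absurd hLN (by exact_mod_cast hlt.not_ge)

theorem coeff_eq_zero_of_codeword_split (hbasic : IsBasic G)
    (hdeg : ∀ i j, (G i j).natDegree ≤ γ i)
    (hrank : Function.Injective (leadingRowCoeff G γ).vecMul) {u w : Fin k → F[X]}
    {vt vh : Fin n → F[X]} {L : ℕ} (hvt : vt = w ᵥ* G) (hsum : u ᵥ* G = vt + vh)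
    (hvt_deg : ∀ j, (vt j).degree < L) (hvh : ∀ j, ∀ t, t < L → (vh j).coeff t = 0) :
    ∀ i t, t < L → L ≤ t + γ i → (u i).coeff t = 0 := by
  obtain ⟨H, hH⟩ := hbasic
  have hu : u = w + vh ᵥ* H := by
    simpa [vecMul_vecMul, hH, add_vecMul, hvt] using congrArg (· ᵥ* H) hsum
  intro i t htL hLt
  rw [hu, Pi.add_apply, coeff_add,
    coeff_eq_zero_of_degree_vecMul_lt hdeg hrank (hvt ▸ hvt_deg) i t hLt,
    X_pow_dvd_iff.1 (dvd_vecMul_apply (fun j => X_pow_dvd_iff.2 (hvh j)) H i) t htL, add_zero]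

end CodewordSplit

theorem stmt8_general {F : Type*} [Field F] {k n : ℕ}
    (G : Matrix (Fin k) (Fin n) (Polynomial F)) (γ : Fin k → ℕ)
    (hbasic : IsBasic G)
    (hγ : ∀ i, rowDeg G i = (γ i : WithBot ℕ))
    (hmin : ocl G = ∑ i, γ i)
    (u : Fin k → Polynomial F) (N L : ℕ)
    (hv0 : (fun j => (Matrix.vecMul u G j).coeff 0) ≠ (0 : Fin n → F))
    (hN : (Finset.univ.sup fun j : Fin n => (Matrix.vecMul u G j).degree) = (N : WithBot ℕ))
    (hL1 : 1 ≤ L) (hLN : L ≤ N)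
    (x : StateIdx γ → LaurentSeries F)
    (hx : x = (polyToLS F Polynomial.X) •
      Matrix.vecMul (fun i => polyToLS F (u i))
        ((ccfB F γ).map (fun a => polyToLS F (Polynomial.C a)) *
          (1 - (polyToLS F Polynomial.X) •
            (ccfA F γ).map (fun a => polyToLS F (Polynomial.C a)))⁻¹)) :
    (∀ s, (x s).coeff (L : ℤ) = 0) ↔
      ∃ vt vh : Fin n → Polynomial F,
        (∃ w : Fin k → Polynomial F, vt = Matrix.vecMul w G) ∧
        (∃ w : Fin k → Polynomial F, vh = Matrix.vecMul w G) ∧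
        vt ≠ 0 ∧ vh ≠ 0 ∧ Matrix.vecMul u G = vt + vh ∧
        (∀ j, (vt j).degree < (L : WithBot ℕ)) ∧
        (∀ j, ∀ t : ℕ, t < L → (vh j).coeff t = 0) := by
  have hdeg : ∀ i j, (G i j).natDegree ≤ γ i := fun i j => natDegree_le_iff_degree_le.2
    (hγ i ▸ Finset.le_sup (f := fun j => (G i j).degree) (Finset.mem_univ j))
  have hrank := leadingRowCoeff_vecMul_injective hbasic hdeg hmin
  subst hx
  refine (ccfState_coeff_eq_zero_iff u L).trans
    ⟨exists_codeword_split_of_coeff_eq_zero hdeg hv0 hN hL1 hLN, ?_⟩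
  rintro ⟨vt, vh, ⟨w, hw⟩, -, -, -, hsum, hvt, hvh⟩
  exact coeff_eq_zero_of_codeword_split hbasic hdeg hrank hw hsum hvt hvh

theorem stmt8 {F : Type*} [Field F] {k n : ℕ}
    (G : Matrix (Fin k) (Fin n) (Polynomial F)) (γ : Fin k → ℕ)
    (hbasic : IsBasic G)
    (hγ : ∀ i, rowDeg G i = (γ i : WithBot ℕ))
    (hmin : ocl G = ∑ i, γ i)
    (u : Fin k → Polynomial F) (N L : ℕ)
    (hv0 : (fun j => (Matrix.vecMul u G j).coeff 0) ≠ (0 : Fin n → F))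
    (hN : (Finset.univ.sup fun j : Fin n => (Matrix.vecMul u G j).degree) = (N : WithBot ℕ))
    (hNpos : 0 < N) (hL1 : 1 ≤ L) (hLN : L ≤ N)
    (x : StateIdx γ → LaurentSeries F)
    (hx : x = (polyToLS F Polynomial.X) •
      Matrix.vecMul (fun i => polyToLS F (u i))
        ((ccfB F γ).map (fun a => polyToLS F (Polynomial.C a)) *
          (1 - (polyToLS F Polynomial.X) •
            (ccfA F γ).map (fun a => polyToLS F (Polynomial.C a)))⁻¹)) :
    (∀ s, (x s).coeff (L : ℤ) = 0) ↔
      ∃ vt vh : Fin n → Polynomial F,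
        (∃ w : Fin k → Polynomial F, vt = Matrix.vecMul w G) ∧
        (∃ w : Fin k → Polynomial F, vh = Matrix.vecMul w G) ∧
        vt ≠ 0 ∧ vh ≠ 0 ∧ Matrix.vecMul u G = vt + vh ∧
        (∀ j, (vt j).degree < (L : WithBot ℕ)) ∧
        (∀ j, ∀ t : ℕ, t < L → (vh j).coeff t = 0) :=
  stmt8_general G γ hbasic hγ hmin u N L hv0 hN hL1 hLN x hx
end

section
/- Let G be a minimal basic generator matrix with memory m (the maximal Forney index). Let v = uG be a polynomial codeword with u = Σ_{i=0}^L u_i z^i, u_0 ≠ 0 ≠ u_L. If u_{l+1} = u_{l+2} = … = u_{l+m} = 0 for some l ∈ {0,…,L−m−1}, then v is concatenated, i.e., v = ṽ + v̂ for nonzero polynomial codewords ṽ, v̂ with deg ṽ < T and v̂ ∈ z^T F[z]^n for some T. -/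
open Polynomial Matrix
open scoped Classical

theorem stmt12 {F : Type*} [Field F] {k n : ℕ}
    (G : Matrix (Fin k) (Fin n) (Polynomial F)) (γ : Fin k → ℕ)
    (hbasic : IsBasic G)
    (hγ : ∀ i, rowDeg G i = (γ i : WithBot ℕ))
    (hmin : ocl G = ∑ i, γ i)
    (m : ℕ) (hm : m = Finset.univ.sup γ)
    (u : Fin k → Polynomial F) (L l : ℕ)
    (hu0 : (fun i => (u i).coeff 0) ≠ (0 : Fin k → F))
    (huL : (fun i => (u i).coeff L) ≠ (0 : Fin k → F))
    (hudeg : ∀ i, ∀ t : ℕ, L < t → (u i).coeff t = 0)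
    (hl : l + m + 1 ≤ L)
    (hzero : ∀ t : ℕ, l + 1 ≤ t → t ≤ l + m → (fun i => (u i).coeff t) = (0 : Fin k → F)) :
    ∃ T : ℕ, 1 ≤ T ∧ ∃ vt vh : Fin n → Polynomial F,
      (∃ w : Fin k → Polynomial F, vt = Matrix.vecMul w G) ∧
      (∃ w : Fin k → Polynomial F, vh = Matrix.vecMul w G) ∧
      vt ≠ 0 ∧ vh ≠ 0 ∧ Matrix.vecMul u G = vt + vh ∧
      (∀ j, (vt j).degree < (T : WithBot ℕ)) ∧
      (∀ j, ∀ t : ℕ, t < T → (vh j).coeff t = 0) := by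

  classical
  -- Split u into low part (degrees ≤ l) and high part.
  set wt : Fin k → Polynomial F := fun i =>
    ∑ t ∈ Finset.range (l + 1), Polynomial.monomial t ((u i).coeff t) with hwt
  set wh : Fin k → Polynomial F := fun i => u i - wt i with hwh
  have hwt_coeff : ∀ i s, (wt i).coeff s = if s ≤ l then (u i).coeff s else 0 := by
    intro i s
    simp only [hwt, Polynomial.finset_sum_coeff, Polynomial.coeff_monomial]
    rw [Finset.sum_ite_eq' (Finset.range (l + 1)) s]
    simp [Nat.lt_succ_iff]
  have hwh_coeff : ∀ i s, (wh i).coeff s = if s ≤ l then 0 else (u i).coeff s := by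
    intro i s
    simp only [hwh, Polynomial.coeff_sub, hwt_coeff]
    split <;> simp
  have hwh_low : ∀ i s, s ≤ l + m → (wh i).coeff s = 0 := by
    intro i s hs
    rw [hwh_coeff]
    split
    · rfl
    · rename_i h
      push_neg at h
      exact congrFun (hzero s h (by omega)) i
  -- injectivity from basicness
  obtain ⟨H, hH⟩ := hbasic
  have hinj : ∀ w : Fin k → Polynomial F, Matrix.vecMul w G = 0 → w = 0 := by
    intro w hw
    have : Matrix.vecMul (Matrix.vecMul w G) H = Matrix.vecMul w (G * H) :=
      (Matrix.vecMul_vecMul w G H)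
    rw [hw, hH] at this
    simpa using this.symm
  refine ⟨l + m + 1, by omega, Matrix.vecMul wt G, Matrix.vecMul wh G,
    ⟨wt, rfl⟩, ⟨wh, rfl⟩, ?_, ?_, ?_, ?_, ?_⟩
  · -- vt ≠ 0
    intro h
    have hwt0 := hinj wt h
    obtain ⟨i, hi⟩ := Function.ne_iff.mp hu0
    apply hi
    have := congrFun hwt0 i
    have h0 : (wt i).coeff 0 = (u i).coeff 0 := by rw [hwt_coeff]; simp
    rw [this] at h0
    simpa using h0.symm
  · -- vh ≠ 0
    intro h
    have hwh0 := hinj wh h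
    obtain ⟨i, hi⟩ := Function.ne_iff.mp huL
    apply hi
    have := congrFun hwh0 i
    have h0 : (wh i).coeff L = (u i).coeff L := by
      rw [hwh_coeff]
      rw [if_neg (by omega)]
    rw [this] at h0
    simpa using h0.symm
  · -- sum
    have : u = wt + wh := by funext i; simp [hwh]
    rw [this, Matrix.add_vecMul]
  · -- degree bound on vt
    intro j
    have hvt : Matrix.vecMul wt G j = ∑ i, wt i * G i j := by
      simp [Matrix.vecMul, dotProduct]
    rw [hvt]
    refine lt_of_le_of_lt (Polynomial.degree_sum_le _ _) ?_
    rw [Finset.sup_lt_iff (by exact WithBot.bot_lt_coe _)]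
    intro i _
    refine lt_of_le_of_lt (Polynomial.degree_mul_le _ _) ?_
    have h1 : (wt i).degree ≤ (l : WithBot ℕ) := by
      refine le_trans (Polynomial.degree_sum_le _ _) ?_
      rw [Finset.sup_le_iff]
      intro t ht
      refine le_trans (Polynomial.degree_monomial_le _ _) ?_
      exact_mod_cast Nat.le_of_lt_succ (Finset.mem_range.mp ht)
    have h2 : (G i j).degree ≤ (m : WithBot ℕ) := by
      have : (G i j).degree ≤ rowDeg G i := by
        rw [rowDeg]; exact Finset.le_sup (f := fun j => (G i j).degree) (Finset.mem_univ j)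
      rw [hγ i] at this
      refine le_trans this ?_
      exact_mod_cast (hm ▸ Finset.le_sup (Finset.mem_univ i))
    calc (wt i).degree + (G i j).degree ≤ (l : WithBot ℕ) + (m : WithBot ℕ) :=
          add_le_add h1 h2
      _ = ((l + m : ℕ) : WithBot ℕ) := by push_cast; ring
      _ < ((l + m + 1 : ℕ) : WithBot ℕ) := by
          exact_mod_cast Nat.lt_succ_self _
  · -- low coefficients of vh vanish
    intro j t ht
    have hvh : Matrix.vecMul wh G j = ∑ i, wh i * G i j := by
      simp [Matrix.vecMul, dotProduct]
    rw [hvh, Polynomial.finset_sum_coeff]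
    refine Finset.sum_eq_zero fun i _ => ?_
    rw [Polynomial.coeff_mul]
    refine Finset.sum_eq_zero fun p hp => ?_
    have hp1 : p.1 ≤ l + m := by
      have := Finset.HasAntidiagonal.antidiagonal.fst_le hp
      omega
    rw [hwh_low i p.1 hp1, zero_mul]
end

section
/- Let G be a minimal basic generator matrix of a convolutional code C. For every α ∈ ℕ, the set of atomic polynomial codewords of C of weight at most α is finite. -/
open Polynomial Matrix
open scoped Classical

/-- A polynomial codeword `v` (with `v₀ ≠ 0`) is atomic if it is not the sum of two
nonzero, non-overlapping polynomial codewords. -/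
def IsAtomicCW {F : Type*} [Field F] {k n : ℕ}
    (G : Matrix (Fin k) (Fin n) (Polynomial F)) (v : Fin n → Polynomial F) : Prop :=
  (∃ u : Fin k → Polynomial F, v = Matrix.vecMul u G) ∧
  (fun j => (v j).coeff 0) ≠ (0 : Fin n → F) ∧
  ¬ ∃ (L : ℕ) (vt vh : Fin n → Polynomial F), 1 ≤ L ∧
      (∃ w : Fin k → Polynomial F, vt = Matrix.vecMul w G) ∧
      (∃ w : Fin k → Polynomial F, vh = Matrix.vecMul w G) ∧
      vt ≠ 0 ∧ vh ≠ 0 ∧ v = vt + vh ∧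
      (∀ j, (vt j).degree < (L : WithBot ℕ)) ∧
      (∀ j, ∀ t : ℕ, t < L → (vh j).coeff t = 0)

/-- The weight of a polynomial vector: the total number of nonzero coefficients. -/
def polyWt {F : Type*} [Field F] {n : ℕ} (v : Fin n → Polynomial F) : ℕ :=
  ∑ j, (v j).support.card

/-!
Let `H` be a polynomial right inverse of `G`, and let `m`, `m'` bound the degrees of the entries
of `G` and `H`. If an atomic codeword `v = u G` had `m' + m + 1` consecutive zero coefficients
after its constant term, the message `u = v H` would have `m + 1` consecutive zero coefficients;
cutting `u` there cuts `v` into two nonzero codewords living in disjoint degree ranges, which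
atomicity forbids. So consecutive nonzero coefficient positions of `v` are at most `m' + m + 1`
apart, and `deg v ≤ (m' + m + 1) · wt v`. Over a finite field only finitely many vectors have
bounded degree.
-/

namespace Polynomial

theorem coeff_vecMul_eq_zero {R : Type*} [Semiring R] {ι κ : Type*} [Fintype ι]
    (u : ι → R[X]) {M : Matrix ι κ R[X]} {d : ℕ} (hM : ∀ i j, (M i j).natDegree ≤ d) (j : κ)
    {s : ℕ} (hu : ∀ i r, r ≤ s → s ≤ r + d → (u i).coeff r = 0) :
    ((u ᵥ* M) j).coeff s = 0 := by
  simp only [Matrix.vecMul, dotProduct, finsetSum_coeff, coeff_mul]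
  refine Finset.sum_eq_zero fun i _ => Finset.sum_eq_zero fun p hp => ?_
  have hps : p.1 + p.2 = s := Finset.HasAntidiagonal.mem_antidiagonal.mp hp
  by_cases hp2 : p.2 ≤ d
  · rw [hu i p.1 (by omega) (by omega), zero_mul]
  · rw [coeff_eq_zero_of_natDegree_lt ((hM i j).trans_lt (not_le.mp hp2)), mul_zero]

theorem exists_vecMul_split {R : Type*} [Ring R] {ι κ : Type*} [Fintype ι]
    (u : ι → R[X]) {M : Matrix ι κ R[X]} {d : ℕ} (hM : ∀ i j, (M i j).natDegree ≤ d) {T : ℕ}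
    (hu : ∀ i r, T ≤ r → r ≤ T + d → (u i).coeff r = 0) :
    ∃ ulo uhi : ι → R[X], u ᵥ* M = ulo ᵥ* M + uhi ᵥ* M ∧
      (∀ j s, T + d ≤ s → ((ulo ᵥ* M) j).coeff s = 0) ∧
      (∀ j s, s ≤ T + d → ((uhi ᵥ* M) j).coeff s = 0) := by
  let ulo : ι → R[X] := fun i => PowerSeries.trunc T (u i : PowerSeries R)
  have hulo : ∀ i r, (ulo i).coeff r = if r < T then (u i).coeff r else 0 := by
    intro i r
    simp only [ulo, PowerSeries.coeff_trunc, coeff_coe]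
  refine ⟨ulo, u - ulo, by rw [← Matrix.add_vecMul, add_sub_cancel], ?_, ?_⟩
  · refine fun j s hs => coeff_vecMul_eq_zero _ hM j fun i r _ hr => ?_
    rw [hulo, if_neg (by omega)]
  · refine fun j s hs => coeff_vecMul_eq_zero _ hM j fun i r hr _ => ?_
    rw [Pi.sub_apply, coeff_sub, hulo]
    split_ifs with hrT
    · exact sub_self _
    · rw [hu i r (by omega) (by omega), sub_zero]

theorem finite_setOf_natDegree_le {R : Type*} [CommRing R] [Finite R] (N : ℕ) :
    {p : R[X] | p.natDegree ≤ N}.Finite := by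
  have : Finite (degreeLT R (N + 1)) := .of_equiv _ (degreeLTEquiv R (N + 1)).toEquiv.symm
  refine (Set.toFinite (degreeLT R (N + 1) : Set R[X])).subset fun p hp => ?_
  rw [SetLike.mem_coe, mem_degreeLT]
  exact (degree_le_of_natDegree_le hp).trans_lt (by exact_mod_cast Nat.lt_succ_self N)

end Polynomial

theorem Matrix.exists_forall_natDegree_le {R : Type*} [Semiring R] {ι κ : Type*} [Fintype ι]
    [Fintype κ] (M : Matrix ι κ R[X]) : ∃ d, ∀ i j, (M i j).natDegree ≤ d :=
  ⟨_, fun i j => Finset.le_sup (f := fun ij : ι × κ => (M ij.1 ij.2).natDegree)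
    (Finset.mem_univ (i, j))⟩

theorem Finset.le_mul_card_filter_lt_of_gaps_le {S : Finset ℕ} {g : ℕ}
    (hgaps : ∀ t ∈ S, t ≠ 0 → ∃ s ∈ S, s < t ∧ t ≤ s + g) :
    ∀ t ∈ S, t ≤ g * (S.filter (· < t)).card := by
  intro t
  induction t using Nat.strong_induction_on with
  | _ t ih =>
    intro ht
    rcases eq_or_ne t 0 with rfl | ht0
    · exact Nat.zero_le _
    obtain ⟨s, hsS, hst, hts⟩ := hgaps t ht ht0
    have hcard : (S.filter (· < s)).card < (S.filter (· < t)).card :=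
      Finset.card_lt_card
        ⟨fun x hx => by simp only [Finset.mem_filter] at hx ⊢; exact ⟨hx.1, hx.2.trans hst⟩,
          fun hsub => by simpa using hsub (Finset.mem_filter.mpr ⟨hsS, hst⟩)⟩
    calc t ≤ s + g := hts
      _ ≤ g * (S.filter (· < s)).card + g := by gcongr; exact ih s hst hsS
      _ ≤ g * (S.filter (· < t)).card := by rw [← Nat.mul_succ]; gcongr; exact hcard

open Polynomial

section AtomicCodewords

variable {F : Type*} [Field F] {k n : ℕ}

noncomputable def coeffSupport {ι : Type*} [Fintype ι] (v : ι → F[X]) : Finset ℕ :=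
  Finset.univ.biUnion fun j => (v j).support

theorem mem_coeffSupport {ι : Type*} [Fintype ι] {v : ι → F[X]} {s : ℕ} :
    s ∈ coeffSupport v ↔ ∃ j, (v j).coeff s ≠ 0 := by
  simp [coeffSupport]

theorem card_coeffSupport_le_polyWt (v : Fin n → F[X]) : (coeffSupport v).card ≤ polyWt v :=
  Finset.card_biUnion_le

variable {G : Matrix (Fin k) (Fin n) F[X]} {H : Matrix (Fin n) (Fin k) F[X]} {m m' : ℕ}

theorem IsAtomicCW.zero_mem_coeffSupport {v : Fin n → F[X]} (hv : IsAtomicCW G v) :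
    0 ∈ coeffSupport v := by
  obtain ⟨j, hj⟩ := Function.ne_iff.mp hv.2.1
  exact mem_coeffSupport.mpr ⟨j, hj⟩

theorem IsAtomicCW.coeff_eq_zero_of_gap (hGH : G * H = 1) (hG : ∀ i j, (G i j).natDegree ≤ m)
    (hH : ∀ j i, (H j i).natDegree ≤ m') {v : Fin n → F[X]} (hv : IsAtomicCW G v) {L : ℕ}
    (hL : 1 ≤ L) (hgap : ∀ j s, L ≤ s → s ≤ L + m' + m → (v j).coeff s = 0) :
    ∀ j s, L ≤ s → (v j).coeff s = 0 := by
  obtain ⟨⟨u, rfl⟩, hv0, hatomic⟩ := hv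
  have hu : u = (u ᵥ* G) ᵥ* H := by rw [Matrix.vecMul_vecMul, hGH, Matrix.vecMul_one]
  have hugap : ∀ i r, L + m' ≤ r → r ≤ L + m' + m → (u i).coeff r = 0 := fun i r h₁ h₂ => by
    rw [hu]
    exact coeff_vecMul_eq_zero _ hH i fun j s _ _ => hgap j s (by omega) (by omega)
  obtain ⟨ulo, uhi, hsplit, hlo, hhi⟩ := exists_vecMul_split u hG hugap
  by_contra! ⟨j, s, hLs, hs⟩
  have hs_far : L + m' + m < s := by
    by_contra! hs_near
    exact hs (hgap j s hLs hs_near)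
  refine hatomic ⟨L + m' + m, ulo ᵥ* G, uhi ᵥ* G, by omega, ⟨ulo, rfl⟩, ⟨uhi, rfl⟩, ?_, ?_,
    hsplit, fun j => (degree_lt_iff_coeff_zero _ _).mpr fun s hs => hlo j s (by exact_mod_cast hs),
    fun j s hs => hhi j s hs.le⟩
  · obtain ⟨j₀, hj₀⟩ := Function.ne_iff.mp hv0
    refine fun hlo0 => hj₀ ?_
    simp [hsplit, hlo0, hhi j₀ 0 (by omega)]
  · refine fun hhi0 => hs ?_
    simp [hsplit, hhi0, hlo j s (by omega)]

theorem IsAtomicCW.exists_mem_coeffSupport_near (hGH : G * H = 1)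
    (hG : ∀ i j, (G i j).natDegree ≤ m) (hH : ∀ j i, (H j i).natDegree ≤ m')
    {v : Fin n → F[X]} (hv : IsAtomicCW G v) :
    ∀ t ∈ coeffSupport v, t ≠ 0 → ∃ s ∈ coeffSupport v, s < t ∧ t ≤ s + (m' + m + 1) := by
  intro t ht ht0
  set P := (coeffSupport v).filter (· < t)
  have hP : P.Nonempty := ⟨0, Finset.mem_filter.mpr ⟨hv.zero_mem_coeffSupport, by omega⟩⟩
  obtain ⟨hsS, hst⟩ := Finset.mem_filter.mp (P.max'_mem hP)
  refine ⟨P.max' hP, hsS, hst, not_lt.mp fun hfar => ?_⟩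
  have hgap : ∀ j s, P.max' hP + 1 ≤ s → s ≤ P.max' hP + 1 + m' + m → (v j).coeff s = 0 := by
    refine fun j s hs₁ hs₂ => not_not.mp fun hs => ?_
    have hsP : s ∈ P := Finset.mem_filter.mpr ⟨mem_coeffSupport.mpr ⟨j, hs⟩, by omega⟩
    exact absurd (P.le_max' s hsP) (by omega)
  obtain ⟨j, hj⟩ := mem_coeffSupport.mp ht
  exact hj (hv.coeff_eq_zero_of_gap hGH hG hH (by omega) hgap j t (by omega))

theorem IsAtomicCW.natDegree_le (hGH : G * H = 1) (hG : ∀ i j, (G i j).natDegree ≤ m)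
    (hH : ∀ j i, (H j i).natDegree ≤ m') {v : Fin n → F[X]} (hv : IsAtomicCW G v) {α : ℕ}
    (hα : polyWt v ≤ α) (j : Fin n) : (v j).natDegree ≤ (m' + m + 1) * α := by
  refine natDegree_le_iff_coeff_eq_zero.mpr fun t ht => not_not.mp fun hne => ?_
  have htS : t ∈ coeffSupport v := mem_coeffSupport.mpr ⟨j, hne⟩
  have ht_le := Finset.le_mul_card_filter_lt_of_gaps_le
    (hv.exists_mem_coeffSupport_near hGH hG hH) t htS
  have hcard : (m' + m + 1) * ((coeffSupport v).filter (· < t)).card ≤ (m' + m + 1) * α := by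
    gcongr
    exact (Finset.card_filter_le _ _).trans ((card_coeffSupport_le_polyWt v).trans hα)
  omega

end AtomicCodewords

theorem stmt13_general {F : Type*} [Field F] [Fintype F] {k n : ℕ}
    (G : Matrix (Fin k) (Fin n) (Polynomial F))
    (hbasic : IsBasic G)
    (α : ℕ) :
    Set.Finite {v : Fin n → Polynomial F | IsAtomicCW G v ∧ polyWt v ≤ α} := by
  obtain ⟨H, hGH⟩ := hbasic
  obtain ⟨m, hG⟩ := G.exists_forall_natDegree_le
  obtain ⟨m', hH⟩ := H.exists_forall_natDegree_le
  refine (Set.Finite.pi (t := fun _ : Fin n => {p : F[X] | p.natDegree ≤ (m' + m + 1) * α})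
    fun _ => finite_setOf_natDegree_le _).subset ?_
  rintro v ⟨hv, hα⟩ j -
  exact hv.natDegree_le hGH hG hH hα j

theorem stmt13 {F : Type*} [Field F] [Fintype F] {k n : ℕ}
    (G : Matrix (Fin k) (Fin n) (Polynomial F)) (γ : Fin k → ℕ)
    (hbasic : IsBasic G)
    (hγ : ∀ i, rowDeg G i = (γ i : WithBot ℕ))
    (hmin : ocl G = ∑ i, γ i)
    (α : ℕ) :
    Set.Finite {v : Fin n → Polynomial F | IsAtomicCW G v ∧ polyWt v ≤ α} :=
  stmt13_general G hbasic α
end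

section
/- Let Γ = Λ_G + E_{0,0} be the adjacency matrix of the extended state diagram of a minimal encoder G (including the loop 0 →(0/0)→ 0), and let ρ_r = rank of the stacked matrix (B; BA; …; BA^r). Then for every r ≥ 1, the number of nonzero entries in the first row of Γ^r equals q^{ρ_{r−1}}. -/
open Polynomial Matrix
open scoped Classical

/-- The adjacency matrix of the state diagram of the encoder `G` with row degrees `γ`,
indexed directly by the state space `F^γ`.  The entry at `(X,Y)` is
`Σ_α λ_{X,Y}^{(α)} W^α`, where `λ_{X,Y}^{(α)}` counts inputs `u` with
`Y = X·A + u·B` and `wt(X·C + u·D) = α`, except that the trivial loop at `(0,0)`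
with output weight `0` is excluded. -/
noncomputable def adjMat {F : Type*} [Field F] [Fintype F] {k n : ℕ} (γ : Fin k → ℕ)
    (G : Matrix (Fin k) (Fin n) (Polynomial F)) :
    Matrix (StateIdx γ → F) (StateIdx γ → F) (Polynomial ℚ) :=
  fun X Y => ∑ u : Fin k → F,
    if Matrix.vecMul X (ccfA F γ) + Matrix.vecMul u (ccfB F γ) = Y ∧
        ¬(X = 0 ∧ Y = 0 ∧
          Matrix.vecMul X (ccfC γ G) + Matrix.vecMul u (ccfD G) = 0) then
      (Polynomial.X : Polynomial ℚ) ^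
        hamWt (Matrix.vecMul X (ccfC γ G) + Matrix.vecMul u (ccfD G))
    else 0

set_option synthInstance.maxHeartbeats 1000000
set_option maxHeartbeats 1000000

/-- The stacked controllability-type matrix `(B; BA; …; BA^r)`. -/
noncomputable def stackedBA (F : Type*) [Field F] {k : ℕ} (γ : Fin k → ℕ) (r : ℕ) :
    Matrix (Fin (r + 1) × Fin k) (StateIdx γ) F :=
  fun p s => ((ccfB F γ) * (ccfA F γ) ^ (p.1 : ℕ)) p.2 s


namespace Stmt16Aux

/-- all coefficients nonnegative -/
def NNC (p : Polynomial ℚ) : Prop := ∀ m, 0 ≤ p.coeff m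

lemma NNC.zero : NNC 0 := fun m => by simp
lemma NNC.one : NNC 1 := fun m => by
  rcases eq_or_ne m 0 with h | h <;> simp [coeff_one, h]
lemma NNC.add {p q} (hp : NNC p) (hq : NNC q) : NNC (p + q) := fun m => by
  rw [coeff_add]; exact add_nonneg (hp m) (hq m)
lemma NNC.mul {p q} (hp : NNC p) (hq : NNC q) : NNC (p * q) := fun m => by
  rw [coeff_mul]; exact Finset.sum_nonneg fun x _ => mul_nonneg (hp _) (hq _)
lemma NNC.sum {ι : Type*} (s : Finset ι) (f : ι → Polynomial ℚ)
    (h : ∀ i ∈ s, NNC (f i)) : NNC (∑ i ∈ s, f i) :=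
  Finset.sum_induction f NNC (fun _ _ ha hb => ha.add hb) NNC.zero h

lemma NNC.eval_nonneg {p} (hp : NNC p) : 0 ≤ p.eval 1 := by
  rw [eval_eq_sum_range]
  exact Finset.sum_nonneg fun i _ => by simpa using hp i

lemma NNC.eval_ne {p} (hp : NNC p) (h : p ≠ 0) : p.eval 1 ≠ 0 := by
  have : 0 < p.eval 1 := by
    rw [eval_eq_sum_range]
    refine Finset.sum_pos' (fun i _ => by simpa using hp i)
      ⟨p.natDegree, Finset.self_mem_range_succ _, ?_⟩
    have hne : p.coeff p.natDegree ≠ 0 := by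
      exact fun hc => h (Polynomial.leadingCoeff_eq_zero.mp hc)
    simpa using lt_of_le_of_ne (hp _) (Ne.symm hne)
  exact this.ne'

end Stmt16Aux

namespace Stmt16Aux

lemma sum_vecMul' {F : Type*} [Field F] {α m' n' : Type*} [Fintype m'] (s : Finset α)
    (f : α → m' → F) (M : Matrix m' n' F) :
    (∑ a ∈ s, f a) ᵥ* M = ∑ a ∈ s, (f a) ᵥ* M := by
  simpa only [Matrix.vecMulLinear_apply] using map_sum M.vecMulLinear f s

lemma reach {F : Type*} [Field F] [Fintype F] {k : ℕ} (γ : Fin k → ℕ)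
    (N : Matrix (StateIdx γ → F) (StateIdx γ → F) ℚ)
    (hnn : ∀ X Y, 0 ≤ N X Y)
    (hone : ∀ X Y, N X Y ≠ 0 ↔ ∃ u : Fin k → F,
      X ᵥ* ccfA F γ + u ᵥ* ccfB F γ = Y) :
    ∀ m (Y : StateIdx γ → F), (N ^ (m + 1)) 0 Y ≠ 0 ↔
      ∃ v : Fin (m + 1) → Fin k → F,
        Y = ∑ j : Fin (m + 1), (v j) ᵥ* (ccfB F γ * ccfA F γ ^ (j : ℕ)) := by
  classical
  set A := ccfA F γ
  set B := ccfB F γ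
  have hnnp : ∀ r X Y, 0 ≤ (N ^ r) X Y := by
    intro r
    induction r with
    | zero => intro X Y; rcases eq_or_ne X Y with h | h <;>
        simp [pow_zero, Matrix.one_apply, h]
    | succ r ih =>
        intro X Y
        rw [pow_succ, Matrix.mul_apply]
        exact Finset.sum_nonneg fun Z _ => mul_nonneg (ih X Z) (hnn Z Y)
  intro m
  induction m with
  | zero =>
      intro Y
      rw [pow_one, hone]
      constructor
      · rintro ⟨u, hu⟩
        exact ⟨fun _ => u, by simp [← hu, Matrix.zero_vecMul, Fin.sum_univ_one]⟩
      · rintro ⟨v, rfl⟩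
        exact ⟨v 0, by simp [Matrix.zero_vecMul, Fin.sum_univ_one]⟩
  | succ m ih =>
      intro Y
      have key : ∀ w : Fin (m + 2) → Fin k → F,
          ∑ j : Fin (m + 2), w j ᵥ* (B * A ^ (j : ℕ)) =
            (∑ j : Fin (m + 1), w j.succ ᵥ* (B * A ^ (j : ℕ))) ᵥ* A + w 0 ᵥ* B := by
        intro w
        rw [Fin.sum_univ_succ, sum_vecMul', add_comm]
        simp only [Matrix.vecMul_vecMul, Fin.val_zero, pow_zero, mul_one,
          Fin.val_succ, pow_succ, Matrix.mul_one, Matrix.mul_assoc]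
      have hsplit : (N ^ (m + 2)) 0 Y ≠ 0 ↔
          ∃ X, (N ^ (m + 1)) 0 X ≠ 0 ∧ N X Y ≠ 0 := by
        rw [pow_succ, Matrix.mul_apply]
        rw [← not_iff_not]
        push_neg
        rw [Finset.sum_eq_zero_iff_of_nonneg
          (fun Z _ => mul_nonneg (hnnp (m+1) 0 Z) (hnn Z Y))]
        constructor
        · intro h X h1
          by_contra h2
          exact (mul_ne_zero h1 h2) (h X (Finset.mem_univ X))
        · intro h Z _
          by_contra hc
          rcases mul_ne_zero_iff.mp hc with ⟨h1, h2⟩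
          exact h2 (h Z h1)
      rw [hsplit]
      constructor
      · rintro ⟨X, hX, hXY⟩
        obtain ⟨u, hu⟩ := (hone X Y).mp hXY
        obtain ⟨v, hv⟩ := (ih X).mp hX
        refine ⟨Fin.cases u v, ?_⟩
        rw [key]
        subst hv
        simpa using hu.symm
      · rintro ⟨w, rfl⟩
        refine ⟨∑ j : Fin (m + 1), w j.succ ᵥ* (B * A ^ (j : ℕ)),
          (ih _).mpr ⟨fun j => w j.succ, rfl⟩, ?_⟩
        exact (hone _ _).mpr ⟨w 0, (key w).symm⟩

end Stmt16Aux

theorem stmt16 {F : Type*} [Field F] [Fintype F] {k n : ℕ}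
    (G : Matrix (Fin k) (Fin n) (Polynomial F)) (γ : Fin k → ℕ)
    (hbasic : IsBasic G)
    (hγ : ∀ i, rowDeg G i = (γ i : WithBot ℕ))
    (hmin : ocl G = ∑ i, γ i) (hpos : 0 < ∑ i, γ i)
    (r : ℕ) (hr : 1 ≤ r) :
    Nat.card {Y : StateIdx γ → F //
        (((adjMat γ G + Matrix.of fun X Y : StateIdx γ → F =>
            if X = 0 ∧ Y = 0 then (1 : Polynomial ℚ) else 0 :
              Matrix (StateIdx γ → F) (StateIdx γ → F) (Polynomial ℚ)) ^ r)) 0 Y ≠ 0} =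
      Fintype.card F ^ (stackedBA F γ (r - 1)).rank := by
  classical
  obtain ⟨m, rfl⟩ : ∃ m, r = m + 1 := ⟨r - 1, (Nat.succ_pred_eq_of_pos hr).symm⟩
  set A := ccfA F γ with hA
  set B := ccfB F γ with hB
  set E : Matrix (StateIdx γ → F) (StateIdx γ → F) (Polynomial ℚ) :=
    Matrix.of fun X Y : StateIdx γ → F =>
      if X = 0 ∧ Y = 0 then (1 : Polynomial ℚ) else 0 with hE
  set Γ : Matrix (StateIdx γ → F) (StateIdx γ → F) (Polynomial ℚ) :=
    adjMat γ G + E with hGam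
  have hΓnn : ∀ X Y, Stmt16Aux.NNC (Γ X Y) := by
    intro X Y
    have h1 : Stmt16Aux.NNC (adjMat γ G X Y) := by
      unfold adjMat
      refine Stmt16Aux.NNC.sum _ _ fun u _ => ?_
      split_ifs with h
      · intro mm
        rw [Polynomial.coeff_X_pow]
        split_ifs <;> norm_num
      · exact Stmt16Aux.NNC.zero
    have h2 : Stmt16Aux.NNC (E X Y) := by
      show Stmt16Aux.NNC (if X = 0 ∧ Y = 0 then (1 : Polynomial ℚ) else 0)
      split_ifs
      · exact Stmt16Aux.NNC.one
      · exact Stmt16Aux.NNC.zero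
    exact h1.add h2
  have hΓpow : ∀ s X Y, Stmt16Aux.NNC ((Γ ^ s) X Y) := by
    intro s
    induction s with
    | zero =>
        intro X Y
        rw [pow_zero, Matrix.one_apply]
        split_ifs
        · exact Stmt16Aux.NNC.one
        · exact Stmt16Aux.NNC.zero
    | succ s ih =>
        intro X Y
        rw [pow_succ, Matrix.mul_apply]
        exact Stmt16Aux.NNC.sum _ _ fun Z _ => (ih X Z).mul (hΓnn Z Y)
  set N : Matrix (StateIdx γ → F) (StateIdx γ → F) ℚ :=
    Γ.map (Polynomial.eval 1) with hN
  have hmap : ∀ s : ℕ, (Γ ^ s).map (Polynomial.eval (1 : ℚ)) = N ^ s := by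
    intro s
    have h := map_pow ((Polynomial.evalRingHom (1 : ℚ)).mapMatrix) Γ s
    simpa [RingHom.mapMatrix_apply, Polynomial.coe_evalRingHom] using h
  have hiff : ∀ Y, ((Γ ^ (m + 1)) 0 Y ≠ 0) ↔ ((N ^ (m + 1)) 0 Y ≠ 0) := by
    intro Y
    have hm : (N ^ (m + 1)) 0 Y = Polynomial.eval 1 ((Γ ^ (m + 1)) 0 Y) := by
      rw [← hmap]; rfl
    constructor
    · intro h
      rw [hm]
      exact (hΓpow _ 0 Y).eval_ne h
    · intro h hc
      rw [hm, hc] at h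
      simp at h
  have hNnn : ∀ X Y, 0 ≤ N X Y := fun X Y => (hΓnn X Y).eval_nonneg
  have hone : ∀ X Y, N X Y ≠ 0 ↔ ∃ u : Fin k → F, X ᵥ* A + u ᵥ* B = Y := by
    intro X Y
    have hNval : N X Y = (∑ u : Fin k → F,
        if X ᵥ* A + u ᵥ* B = Y ∧
            ¬(X = 0 ∧ Y = 0 ∧ X ᵥ* (ccfC γ G) + u ᵥ* (ccfD G) = 0)
        then (1 : ℚ) else 0) + (if X = 0 ∧ Y = 0 then (1 : ℚ) else 0) := by
      show Polynomial.eval 1 (adjMat γ G X Y + E X Y) = _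
      rw [Polynomial.eval_add]
      congr 1
      · unfold adjMat
        rw [Polynomial.eval_finset_sum]
        refine Finset.sum_congr rfl fun u _ => ?_
        split_ifs <;> simp
      · show Polynomial.eval 1
            (if X = 0 ∧ Y = 0 then (1 : Polynomial ℚ) else 0) = _
        split_ifs <;> simp
    have hterm : ∀ u : Fin k → F, (0 : ℚ) ≤
        if X ᵥ* A + u ᵥ* B = Y ∧
            ¬(X = 0 ∧ Y = 0 ∧ X ᵥ* (ccfC γ G) + u ᵥ* (ccfD G) = 0)
        then (1 : ℚ) else 0 := fun u => by split_ifs <;> norm_num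
    by_cases h0 : X = 0 ∧ Y = 0
    · constructor
      · intro _
        exact ⟨0, by simp [h0.1, h0.2, Matrix.zero_vecMul]⟩
      · intro _
        rw [hNval, if_pos h0]
        have hs := Finset.sum_nonneg fun u (_ : u ∈ Finset.univ) => hterm u
        intro hc
        linarith
    · rw [hNval, if_neg h0, add_zero, ne_eq,
        Finset.sum_eq_zero_iff_of_nonneg fun u _ => hterm u]
      constructor
      · intro h
        by_contra hc
        push_neg at hc
        apply h
        intro u _
        rw [if_neg]
        rintro ⟨heq, -⟩
        exact hc u heq
      · rintro ⟨u, hu⟩ hall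
        have h2 := hall u (Finset.mem_univ u)
        rw [if_pos ⟨hu, fun hcon => h0 ⟨hcon.1, hcon.2.1⟩⟩] at h2
        exact one_ne_zero h2
  have hreach := Stmt16Aux.reach γ N hNnn hone m
  have hrank : ∀ Y : StateIdx γ → F,
      (∃ v : Fin (m + 1) → Fin k → F,
        Y = ∑ j : Fin (m + 1), (v j) ᵥ* (B * A ^ (j : ℕ))) ↔
      Y ∈ LinearMap.range (stackedBA F γ m).vecMulLinear := by
    intro Y
    have hcomp : ∀ v : Fin (m + 1) × Fin k → F,
        v ᵥ* (stackedBA F γ m) =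
          ∑ j : Fin (m + 1), (fun i => v (j, i)) ᵥ* (B * A ^ (j : ℕ)) := by
      intro v
      funext s
      rw [Finset.sum_apply]
      simp only [Matrix.vecMul, dotProduct, stackedBA]
      rw [Fintype.sum_prod_type]
    constructor
    · rintro ⟨v, rfl⟩
      exact ⟨fun p => v p.1 p.2, by rw [Matrix.vecMulLinear_apply, hcomp]⟩
    · rintro ⟨v, rfl⟩
      rw [Matrix.vecMulLinear_apply, hcomp v]
      exact ⟨fun j i => v (j, i), rfl⟩
  have hcard : Nat.card {Y : StateIdx γ → F // (Γ ^ (m + 1)) 0 Y ≠ 0} =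
      Nat.card (LinearMap.range (stackedBA F γ m).vecMulLinear) := by
    apply Nat.card_congr
    apply Equiv.subtypeEquivRight
    intro Y
    rw [hiff Y, hreach Y, hrank Y]
  rw [show m + 1 - 1 = m from rfl]
  rw [hcard, Nat.card_eq_fintype_card, Module.card_eq_pow_finrank (K := F)]
  congr 1
  rw [← Matrix.rank_transpose (stackedBA F γ m), Matrix.rank,
    Matrix.mulVecLin_transpose]
end

section
/- Let F be a finite field and M, M' ∈ F^{k×n} such that wt(uM) = wt(uM') for all u ∈ F^k. Then M and M' are monomially equivalent: M' = MPR for some permutation matrix P ∈ GL_n(F) and nonsingular diagonal matrix R ∈ GL_n(F). -/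
open Polynomial Matrix
open scoped Classical

/-!
Read the columns of `M` as linear functionals `ψ j` on `F^k`, so that `(u M)_j = ψ j u`. For a
subspace `W` of the dual space, `ψ j` vanishes identically on the annihilator `W°` of `W` when
`ψ j ∈ W`, and otherwise has a kernel of index `q = |F|` in `W°`. Double counting the pairs
`(u, j)` with `u ∈ W°` and `ψ j u = 0`, whose number is determined by the weights, therefore
shows that `q` times it equals `|W°| (n + (q - 1) #{j | ψ j ∈ W})`. So the weights determine how
many columns lie in each subspace, hence how many columns span each line and how many vanish,
and matching the columns line by line yields the permutation and the nonzero scalars.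
-/

open Finset

section SpanSingleton

variable {F N ι : Type*} [Field F] [AddCommGroup N] [Module F N]

theorem span_singleton_eq_span_singleton_iff_mem {x y : N} :
    (F ∙ x) = (F ∙ y) ↔ x ∈ F ∙ y ∧ (x = 0 → y = 0) := by
  refine ⟨fun h => ⟨h ▸ Submodule.mem_span_singleton_self x, fun hx => ?_⟩, fun ⟨hxy, h0⟩ => ?_⟩
  · rwa [hx, Submodule.span_zero_singleton, eq_comm, Submodule.span_singleton_eq_bot] at h
  · obtain ⟨t, rfl⟩ := Submodule.mem_span_singleton.mp hxy
    rcases eq_or_ne t 0 with rfl | ht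
    · simp [h0 (zero_smul F y)]
    · exact Submodule.span_singleton_smul_eq (isUnit_iff_ne_zero.mpr ht) y

variable [Fintype ι]

theorem card_span_singleton_eq_of_card_mem_eq {a b : ι → N}
    (h : ∀ W : Submodule F N, #{j | a j ∈ W} = #{j | b j ∈ W}) (L : Submodule F N) :
    #{j | (F ∙ a j) = L} = #{j | (F ∙ b j) = L} := by
  by_cases hL : ∃ y, L = F ∙ y
  · obtain ⟨y, rfl⟩ := hL
    simp only [span_singleton_eq_span_singleton_iff_mem]
    by_cases hy : y = 0
    · simpa [hy] using h ⊥
    · have hcard (c : ι → N) : #{j | c j ∈ F ∙ y ∧ (c j = 0 → y = 0)} =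
          #{j | c j ∈ F ∙ y} - #{j | c j ∈ (⊥ : Submodule F N)} := by
        simp only [hy, imp_false, ← Submodule.mem_bot F]
        rw [filter_and_not, card_sdiff_of_subset (monotone_filter_right _ fun j _ hj => ?_)]
        exact (Submodule.mem_bot F).mp hj ▸ Submodule.zero_mem _
      rw [hcard, hcard, h, h]
  · push Not at hL
    have hempty (c : ι → N) : #{j | (F ∙ c j) = L} = 0 := by
      simpa using fun j hj => hL (c j) hj.symm
    rw [hempty, hempty]

theorem exists_equiv_smul_of_card_mem_eq {a b : ι → N}
    (h : ∀ W : Submodule F N, #{j | a j ∈ W} = #{j | b j ∈ W}) :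
    ∃ (e : ι ≃ ι) (t : ι → Fˣ), ∀ j, b j = t j • a (e j) := by
  have hfiber (L : Submodule F N) :
      Fintype.card {j // (F ∙ b j) = L} = Fintype.card {j // (F ∙ a j) = L} := by
    simpa only [Fintype.card_subtype] using (card_span_singleton_eq_of_card_mem_eq h L).symm
  let e : ι ≃ ι := Equiv.ofFiberEquiv fun L => Fintype.equivOfCardEq (hfiber L)
  have he (j : ι) : (F ∙ a (e j)) = (F ∙ b j) :=
    Equiv.ofFiberEquiv_map (fun L => Fintype.equivOfCardEq (hfiber L)) j
  choose t ht using fun j => Submodule.span_singleton_eq_span_singleton.mp (he j)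
  exact ⟨e, t, fun j => (ht j).symm⟩

end SpanSingleton

theorem sum_ite_one_eq_card_add {ι : Type*} [Fintype ι] (p : ι → Prop) [DecidablePred p]
    {q : ℕ} (hq : 1 ≤ q) :
    ∑ j, (if p j then q else 1) = Fintype.card ι + (q - 1) * #{j | p j} := by
  have h (j : ι) : (if p j then q else 1) = 1 + if p j then q - 1 else 0 := by
    split_ifs <;> omega
  simp only [h, sum_add_distrib, sum_const, card_univ, smul_eq_mul, mul_one, ← sum_filter,
    mul_comm (q - 1)]

theorem card_ker_mul_card_eq_of_ne_zero {F M : Type*} [DivisionRing F] [AddCommGroup M]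
    [Module F M] {f : Module.Dual F M} (hf : f ≠ 0) :
    Nat.card (LinearMap.ker f) * Nat.card F = Nat.card M := by
  rw [Submodule.card_eq_card_quotient_mul_card (LinearMap.ker f),
    Nat.card_congr (f.quotKerEquivOfSurjective (LinearMap.surjective hf)).toEquiv]

section DualCounting

variable {F V ι : Type*} [Field F] [Fintype F] [AddCommGroup V] [Module F V] [Fintype V]

theorem card_dualCoannihilator_inf_ker_mul_card (W : Submodule F (Module.Dual F V))
    (φ : Module.Dual F V) :
    #{v | v ∈ W.dualCoannihilator ∧ φ v = 0} * Fintype.card F =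
      #{v | v ∈ W.dualCoannihilator} * if φ ∈ W then Fintype.card F else 1 := by
  set S := W.dualCoannihilator
  split_ifs with hφ
  · congr 2
    ext v
    simp only [mem_filter, mem_univ, true_and, and_iff_left_iff_imp]
    exact fun hv => (Submodule.mem_dualCoannihilator v).mp hv φ hφ
  · have hne : φ ∘ₗ S.subtype ≠ 0 := by
      refine fun h0 => hφ ?_
      rw [← Subspace.dualCoannihilator_dualAnnihilator_eq (W := W), Submodule.mem_dualAnnihilator]
      exact fun v hv => LinearMap.congr_fun h0 ⟨v, hv⟩
    have hker : Nat.card (LinearMap.ker (φ ∘ₗ S.subtype)) = #{v | v ∈ S ∧ φ v = 0} := by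
      rw [← Fintype.card_subtype, ← Nat.card_eq_fintype_card]
      exact Nat.card_congr (Equiv.subtypeSubtypeEquivSubtypeInter (· ∈ S) (φ · = 0))
    rw [← hker, ← Nat.card_eq_fintype_card, card_ker_mul_card_eq_of_ne_zero hne, mul_one,
      ← Fintype.card_subtype, Nat.card_eq_fintype_card]

variable [Fintype ι]

theorem sum_card_apply_eq_zero_mul_card (ψ : ι → Module.Dual F V)
    (W : Submodule F (Module.Dual F V)) :
    (∑ v ∈ {v | v ∈ W.dualCoannihilator}, #{j | ψ j v = 0}) * Fintype.card F =
      #{v | v ∈ W.dualCoannihilator} *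
        (Fintype.card ι + (Fintype.card F - 1) * #{j | ψ j ∈ W}) := by
  have hcount := sum_card_bipartiteAbove_eq_sum_card_bipartiteBelow
    (s := {v | v ∈ W.dualCoannihilator}) (t := univ) (r := fun v j => ψ j v = 0)
  simp only [bipartiteAbove, bipartiteBelow, filter_filter] at hcount
  rw [hcount, sum_mul, sum_congr rfl fun j _ => card_dualCoannihilator_inf_ker_mul_card W (ψ j),
    ← mul_sum, sum_ite_one_eq_card_add _ Fintype.card_pos]

theorem card_mem_eq_of_card_apply_eq_zero_eq {ψ ψ' : ι → Module.Dual F V}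
    (h : ∀ v, #{j | ψ j v = 0} = #{j | ψ' j v = 0}) (W : Submodule F (Module.Dual F V)) :
    #{j | ψ j ∈ W} = #{j | ψ' j ∈ W} := by
  have hS : 0 < #{v | v ∈ W.dualCoannihilator} := card_pos.mpr ⟨0, by simp⟩
  have hq : 0 < Fintype.card F - 1 := Nat.sub_pos_of_lt Fintype.one_lt_card
  have hsum := sum_card_apply_eq_zero_mul_card ψ W
  rw [sum_congr rfl fun v _ => h v, sum_card_apply_eq_zero_mul_card ψ' W] at hsum
  exact Nat.eq_of_mul_eq_mul_left hq (Nat.add_left_cancel (Nat.eq_of_mul_eq_mul_left hS hsum)).symm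

theorem exists_equiv_smul_of_card_apply_eq_zero_eq {ψ ψ' : ι → Module.Dual F V}
    (h : ∀ v, #{j | ψ j v = 0} = #{j | ψ' j v = 0}) :
    ∃ (e : ι ≃ ι) (t : ι → Fˣ), ∀ j, ψ' j = t j • ψ (e j) :=
  exists_equiv_smul_of_card_mem_eq (card_mem_eq_of_card_apply_eq_zero_eq h)

end DualCounting

theorem card_eq_zero_add_hamWt {F ι : Type*} [Field F] [Fintype ι] (v : ι → F) :
    #{j | v j = 0} + hamWt v = Fintype.card ι := by
  rw [hamWt, Nat.card_eq_fintype_card, Fintype.card_subtype, card_filter_add_card_filter_not,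
    card_univ]

theorem stmt17 {F : Type*} [Field F] [Fintype F] {k n : ℕ}
    (M M' : Matrix (Fin k) (Fin n) F)
    (h : ∀ u : Fin k → F, hamWt (Matrix.vecMul u M) = hamWt (Matrix.vecMul u M')) :
    ∃ P R : Matrix (Fin n) (Fin n) F,
      (∃ σ : Equiv.Perm (Fin n), P = Matrix.of fun i j => if σ i = j then 1 else 0) ∧
      (∃ d : Fin n → F, (∀ j, d j ≠ 0) ∧ R = Matrix.diagonal d) ∧
      M' = M * P * R := by
  let column (A : Matrix (Fin k) (Fin n) F) (j : Fin n) : Module.Dual F (Fin k → F) :=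
    LinearMap.proj j ∘ₗ A.vecMulLinear
  have hzeros (u : Fin k → F) : #{j | column M j u = 0} = #{j | column M' j u = 0} := by
    have hM := card_eq_zero_add_hamWt (u ᵥ* M)
    have hM' := card_eq_zero_add_hamWt (u ᵥ* M')
    have := h u
    show #{j | (u ᵥ* M) j = 0} = #{j | (u ᵥ* M') j = 0}
    omega
  obtain ⟨e, t, het⟩ := exists_equiv_smul_of_card_apply_eq_zero_eq hzeros
  refine ⟨e.symm.toPEquiv.toMatrix, diagonal fun j => t j, ⟨e.symm, ?_⟩,
    ⟨_, fun j => (t j).ne_zero, rfl⟩, ?_⟩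
  · ext i j
    simp
  · ext i j
    have hentry := LinearMap.congr_fun (het j) (Pi.single i 1)
    simp only [column, LinearMap.coe_comp, LinearMap.coe_proj, Function.comp_apply,
      Function.eval, vecMulLinear_apply, single_one_vecMul, LinearMap.smul_apply] at hentry
    rw [PEquiv.mul_toMatrix_toPEquiv, mul_diagonal, Equiv.symm_symm]
    exact hentry.trans (mul_comm _ _)
end

section
/- Let γ ≥ 2 and let π̂ : F_2^γ → F_2^γ be a bijection with π̂(0) = 0 such that for all X ∈ F_2^γ and u ∈ F_2, the last γ−1 coordinates of π̂(u, X_1, …, X_{γ−1}) equal the first γ−1 coordinates of π̂(X). Then π̂ is the identity map. -/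
open Polynomial Matrix
open scoped Classical

/-- Helper: equality of `Fin.mk`s from equality of values. -/
lemma finCongr' {γ : ℕ} {a b : ℕ} (h : a = b) (ha : a < γ) (hb : b < γ) :
    (⟨a, ha⟩ : Fin γ) = ⟨b, hb⟩ := by subst h; rfl

/-- Prepend `m` padding values (given by `p`) to `X`, truncating at length `γ`. -/
def Zsh (γ : ℕ) (p : ℕ → ZMod 2) (m : ℕ) (X : Fin γ → ZMod 2) : Fin γ → ZMod 2 :=
  fun j => if h : m ≤ (j : ℕ) then
      X ⟨(j : ℕ) - m, Nat.lt_of_le_of_lt (Nat.sub_le _ _) j.isLt⟩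
    else p (m - 1 - (j : ℕ))

lemma iter_shift {γ : ℕ} (π : (Fin γ → ZMod 2) → (Fin γ → ZMod 2))
    (hshift : ∀ X Y : Fin γ → ZMod 2,
      (∀ (i : ℕ) (hi : i + 1 < γ), Y ⟨i + 1, hi⟩ = X ⟨i, Nat.lt_of_succ_lt hi⟩) →
      ∀ (i : ℕ) (hi : i + 1 < γ), π Y ⟨i + 1, hi⟩ = π X ⟨i, Nat.lt_of_succ_lt hi⟩)
    (p : ℕ → ZMod 2) :
    ∀ (m : ℕ) (X : Fin γ → ZMod 2) (i : ℕ) (h : i + m < γ),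
      π (Zsh γ p m X) ⟨i + m, h⟩ = π X ⟨i, by omega⟩ := by
  intro m
  induction m with
  | zero =>
    intro X i h
    have hz : Zsh γ p 0 X = X := by
      funext j
      simp only [Zsh, Nat.zero_le, dif_pos]
      exact congrArg X (Fin.ext (show (j : ℕ) - 0 = (j : ℕ) by omega))
    rw [hz]
    exact congrArg (π X) (finCongr' (by omega) _ _)
  | succ m ih =>
    intro X i h
    have hmatch : ∀ (i : ℕ) (hi : i + 1 < γ),
        Zsh γ p (m + 1) X ⟨i + 1, hi⟩ = Zsh γ p m X ⟨i, Nat.lt_of_succ_lt hi⟩ := by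
      intro i hi
      simp only [Zsh]
      split_ifs with h1 h2 h2
      · exact congrArg X (finCongr' (by omega) _ _)
      · omega
      · omega
      · exact congrArg p (by omega)
    have key := hshift (Zsh γ p m X) (Zsh γ p (m + 1) X) hmatch (i + m) h
    calc π (Zsh γ p (m + 1) X) ⟨i + (m + 1), h⟩
        = π (Zsh γ p m X) ⟨i + m, by omega⟩ := key
      _ = π X ⟨i, by omega⟩ := ih X i (by omega)

lemma tail_agree {γ : ℕ} (π : (Fin γ → ZMod 2) → (Fin γ → ZMod 2))
    (hshift : ∀ X Y : Fin γ → ZMod 2,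
      (∀ (i : ℕ) (hi : i + 1 < γ), Y ⟨i + 1, hi⟩ = X ⟨i, Nat.lt_of_succ_lt hi⟩) →
      ∀ (i : ℕ) (hi : i + 1 < γ), π Y ⟨i + 1, hi⟩ = π X ⟨i, Nat.lt_of_succ_lt hi⟩)
    (X X' : Fin γ → ZMod 2)
    (hagree : ∀ (i : ℕ) (hi : i + 1 < γ),
      X ⟨i, Nat.lt_of_succ_lt hi⟩ = X' ⟨i, Nat.lt_of_succ_lt hi⟩) :
    ∀ (i : ℕ) (hi : i + 1 < γ),
      π X ⟨i, Nat.lt_of_succ_lt hi⟩ = π X' ⟨i, Nat.lt_of_succ_lt hi⟩ := by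
  intro i hi
  set Y : Fin γ → ZMod 2 := Zsh γ (fun _ => 0) 1 X with hY
  have hm : ∀ (i : ℕ) (hi : i + 1 < γ), Y ⟨i + 1, hi⟩ = X ⟨i, Nat.lt_of_succ_lt hi⟩ := by
    intro i hi
    simp only [hY, Zsh]
    rw [dif_pos (by omega)]
    exact congrArg X (finCongr' (by omega) _ _)
  have hm' : ∀ (i : ℕ) (hi : i + 1 < γ), Y ⟨i + 1, hi⟩ = X' ⟨i, Nat.lt_of_succ_lt hi⟩ := by
    intro i hi
    rw [hm i hi]
    exact hagree i hi
  rw [← hshift X Y hm i hi, hshift X' Y hm' i hi]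

theorem stmt18 (γ : ℕ) (hγ : 2 ≤ γ)
    (π : (Fin γ → ZMod 2) → (Fin γ → ZMod 2))
    (hbij : Function.Bijective π) (h0 : π 0 = 0)
    (hshift : ∀ X Y : Fin γ → ZMod 2,
      (∀ (i : ℕ) (hi : i + 1 < γ), Y ⟨i + 1, hi⟩ = X ⟨i, Nat.lt_of_succ_lt hi⟩) →
      ∀ (i : ℕ) (hi : i + 1 < γ), π Y ⟨i + 1, hi⟩ = π X ⟨i, Nat.lt_of_succ_lt hi⟩) :
    π = id := by
  have hlast : γ - 1 < γ := by omega
  set last : Fin γ := ⟨γ - 1, hlast⟩ with hlastdef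
  -- Step 1: if the last coordinate of W is 0, then the last coordinate of π W is 0.
  have zV : ∀ W : Fin γ → ZMod 2, W last = 0 → π W last = 0 := by
    intro W hW
    set p : ℕ → ZMod 2 := fun t => W ⟨γ - 2 - t, by omega⟩ with hp
    have hZ : Zsh γ p (γ - 1) 0 = W := by
      funext j
      have hjlt : (j : ℕ) < γ := j.isLt
      simp only [Zsh]
      split_ifs with h1
      · have hj : j = last := by
          rw [hlastdef]
          exact Fin.ext (show (j : ℕ) = γ - 1 by omega)
        rw [hj, hW]; rfl
      · simp only [hp]
        exact congrArg W (Fin.ext (show γ - 2 - (γ - 1 - 1 - (j : ℕ)) = (j : ℕ) by omega))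
    have hkey := iter_shift π hshift p (γ - 1) 0 0 (by omega)
    rw [hZ] at hkey
    have hidx : (⟨0 + (γ - 1), by omega⟩ : Fin γ) = last := by
      rw [hlastdef]; exact finCongr' (by omega) _ _
    rw [hidx] at hkey
    rw [hkey, h0]
    rfl
  -- Step 2: last coordinate is preserved (via injectivity for the flip case).
  have lastEq : ∀ W : Fin γ → ZMod 2, π W last = W last := by
    intro W
    by_cases hW : W last = 0
    · rw [hW]; exact zV W hW
    · have hW1 : W last = 1 := by
        have h2 : ∀ a : ZMod 2, a ≠ 0 → a = 1 := by decide
        exact h2 _ hW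
      set W0 : Fin γ → ZMod 2 := Function.update W last 0 with hW0
      have hW0last : W0 last = 0 := Function.update_self _ _ _
      have hpW0 : π W0 last = 0 := zV W0 hW0last
      have hne : W0 ≠ W := by
        intro hEq
        rw [hEq] at hW0last
        exact hW hW0last
      have hpne : π W0 ≠ π W := fun hEq => hne (hbij.injective hEq)
      have hagree : ∀ (i : ℕ) (hi : i + 1 < γ),
          π W0 ⟨i, Nat.lt_of_succ_lt hi⟩ = π W ⟨i, Nat.lt_of_succ_lt hi⟩ := by
        apply tail_agree π hshift
        intro i hi
        simp only [hW0]
        apply Function.update_of_ne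
        intro hEq
        have hv : i = γ - 1 := by
          have hc := congrArg Fin.val hEq
          rw [hlastdef] at hc
          exact hc
        omega
      have hdiff : π W0 last ≠ π W last := by
        intro hEq
        apply hpne
        funext j
        rcases Nat.lt_or_ge ((j : ℕ) + 1) γ with hj | hj
        · have ha := hagree (j : ℕ) hj
          have hje : (⟨(j : ℕ), Nat.lt_of_succ_lt hj⟩ : Fin γ) = j := Fin.ext rfl
          rwa [hje] at ha
        · have hjlt : (j : ℕ) < γ := j.isLt
          have hje : j = last := by
            rw [hlastdef]; exact Fin.ext (show (j : ℕ) = γ - 1 by omega)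
          rw [hje]; exact hEq
      rw [hW1]
      rw [hpW0] at hdiff
      have h2 : ∀ a : ZMod 2, 0 ≠ a → a = 1 := by decide
      exact h2 _ hdiff
  -- Step 3: every coordinate.
  funext X j
  show π X j = X j
  have hj : (j : ℕ) < γ := j.isLt
  set m : ℕ := γ - 1 - (j : ℕ) with hm
  have hkey := iter_shift π hshift (fun _ => 0) m X (j : ℕ) (by omega)
  have hidx : (⟨(j : ℕ) + m, by omega⟩ : Fin γ) = last := by
    rw [hlastdef]; exact finCongr' (by omega) _ _
  rw [hidx] at hkey
  have hje : (⟨(j : ℕ), by omega⟩ : Fin γ) = j := Fin.ext rfl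
  rw [hje] at hkey
  have hlv : ((last : Fin γ) : ℕ) = γ - 1 := rfl
  rw [← hkey, lastEq]
  simp only [Zsh]
  rw [dif_pos (show m ≤ ((last : Fin γ) : ℕ) by omega)]
  exact congrArg X (Fin.ext (show ((last : Fin γ) : ℕ) - m = (j : ℕ) by omega))
end
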